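/- arXiv:math/0211362 — 5 statements merged into one kernel-verified Lean document; each statement's English description precedes it below -/
import Mathlib

section
/- Let f : X → Y be a continuous map between compact metrizable spaces. Suppose that for any pair of disjoint closed subsets B, C of X there exists a closed subset T of X with dim T ≤ k−1 such that for every y ∈ Y the set T separates the fiber f⁻¹(y) between B and C (i.e., f⁻¹(y) \ T is a disjoint union of two relatively open sets, one containing f⁻¹(y) ∩ B and the other f⁻¹(y) ∩ C). Then there exists a σ-compact subset A ⊆ X with dim A ≤ k−1 such that every fiber of the restriction f|_{X∖A} has covering dimension at most 0. -/
open Set Topology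

noncomputable section

namespace Paper

/-- Order of a family of sets at most `k`: no point belongs to more than `k` members. -/
def OrderLE {X : Type*} (c : Set (Set X)) (k : ℕ) : Prop :=
  ∀ x : X, {u ∈ c | x ∈ u}.Finite ∧ {u ∈ c | x ∈ u}.ncard ≤ k

/-- Covering dimension at most `n` (with `n : ℤ` so that `n = -1` means empty):
every open cover admits an open refinement, still covering, of order at most `n + 1`. -/
def CovDimLE (X : Type*) [TopologicalSpace X] (n : ℤ) : Prop :=
  ∀ c : Set (Set X), (∀ u ∈ c, IsOpen u) → ⋃₀ c = univ →
    ∃ d : Set (Set X), (∀ v ∈ d, IsOpen v) ∧ ⋃₀ d = univ ∧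
      (∀ v ∈ d, ∃ u ∈ c, v ⊆ u) ∧ OrderLE d (n + 1).toNat

/-- Covering dimension of a subset, via the subspace topology. -/
def DimLE {X : Type*} [TopologicalSpace X] (A : Set X) (n : ℤ) : Prop :=
  CovDimLE A n

/-- `T` separates `Z` between `B` and `C`: the complement `Z \ T` splits into two
disjoint relatively open pieces, one containing `Z ∩ B` and the other `Z ∩ C`. -/
def Separates {X : Type*} [TopologicalSpace X] (Z T B C : Set X) : Prop :=
  ∃ U V : Set X, IsOpen U ∧ IsOpen V ∧ Z \ T ⊆ U ∪ V ∧
    Disjoint (U ∩ (Z \ T)) (V ∩ (Z \ T)) ∧ Z ∩ B ⊆ U ∩ (Z \ T) ∧ Z ∩ C ⊆ V ∩ (Z \ T)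

/-- `A` is σ-compact: a countable union of compact sets. -/
def IsSigmaCompact' {X : Type*} [TopologicalSpace X] (A : Set X) : Prop :=
  ∃ K : ℕ → Set X, (∀ n, IsCompact (K n)) ∧ A = ⋃ n, K n

/-- A C-space (property C). -/
def CSpace (X : Type*) [TopologicalSpace X] : Prop :=
  ∀ α : ℕ → Set (Set X), (∀ n, (∀ u ∈ α n, IsOpen u) ∧ ⋃₀ α n = univ) →
    ∃ μ : ℕ → Set (Set X),
      (∀ n, (∀ u ∈ μ n, IsOpen u) ∧ (μ n).PairwiseDisjoint id ∧
        ∀ u ∈ μ n, ∃ v ∈ α n, u ⊆ v) ∧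
      ⋃₀ (⋃ n, μ n) = univ

/-- A family of sets is discrete in `X`: every point has a neighborhood
meeting at most one member of the family. -/
def DiscreteFamily {X : Type*} [TopologicalSpace X] (E : ℕ → Set X) : Prop :=
  ∀ x : X, ∃ W ∈ 𝓝 x, {p : ℕ | (W ∩ E p).Nonempty}.Subsingleton

/-- `E` admits a cover by open subsets of `X` of order ≤ `k` and mesh ≤ `ε`. -/
def AdmitsSmallCover {X : Type*} [MetricSpace X] (E : Set X) (k : ℕ) (ε : ℝ) : Prop :=
  ∃ c : Set (Set X), (∀ u ∈ c, IsOpen u) ∧ E ⊆ ⋃₀ c ∧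
    (∀ u ∈ c, Metric.diam u ≤ ε) ∧ OrderLE c k

/-- The unit cube `[0,1]^k`. -/
abbrev Cube (k : ℕ) : Type := Fin k → Set.Icc (0 : ℝ) 1

/-- A simplicial map between (geometric) simplicial complexes: it sends the vertex set
of each face onto the vertex set of a face and is affine on each closed simplex. -/
def IsSimplicialMap {E F : Type*} [AddCommGroup E] [Module ℝ E] [AddCommGroup F] [Module ℝ F]
    (K : Geometry.SimplicialComplex ℝ E) (L : Geometry.SimplicialComplex ℝ F)
    (p : E → F) : Prop :=
  ∀ s ∈ K.faces, (∃ t ∈ L.faces, p '' (s : Set E) = (t : Set F)) ∧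
    ∃ g : E →ᵃ[ℝ] F, ∀ x ∈ convexHull ℝ (s : Set E), p x = g x

/-- An `ω`-map relative to a subset `S` of the target: a continuous map such that the
preimage of some open cover of `S` refines `ω`. -/
def IsOmegaMapOn {X P : Type*} [TopologicalSpace X] [TopologicalSpace P]
    (κ : X → P) (S : Set P) (ω : Set (Set X)) : Prop :=
  Continuous κ ∧ ∃ c : Set (Set P), (∀ u ∈ c, IsOpen u) ∧ S ⊆ ⋃₀ c ∧
    ∀ u ∈ c, ∃ w ∈ ω, κ ⁻¹' u ⊆ w

/-- `f` admits approximation by `k`-dimensional simplicial maps. -/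
def AdmitsApprox {X Y : Type*} [TopologicalSpace X] [TopologicalSpace Y]
    (f : X → Y) (k : ℕ) : Prop :=
  ∀ ωX : Set (Set X), (∀ u ∈ ωX, IsOpen u) → ⋃₀ ωX = univ →
  ∀ ωY : Set (Set Y), (∀ u ∈ ωY, IsOpen u) → ⋃₀ ωY = univ →
    ∃ (n m : ℕ) (K : Geometry.SimplicialComplex ℝ (Fin n → ℝ))
      (L : Geometry.SimplicialComplex ℝ (Fin m → ℝ))
      (κX : X → (Fin n → ℝ)) (κY : Y → (Fin m → ℝ)) (p : (Fin n → ℝ) → (Fin m → ℝ)),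
      range κX ⊆ K.space ∧ range κY ⊆ L.space ∧
      IsOmegaMapOn κX K.space ωX ∧ IsOmegaMapOn κY L.space ωY ∧
      IsSimplicialMap K L p ∧ (∀ x, p (κX x) = κY (f x)) ∧
      ∀ z : Fin m → ℝ, DimLE {x | x ∈ K.space ∧ p x = z} (k : ℤ)

/-- The open star of a vertex `a` in a simplicial complex `K`: the points of `|K|`
not lying in any closed simplex missing `a`. -/
def openStar {E : Type*} [AddCommGroup E] [Module ℝ E]
    (K : Geometry.SimplicialComplex ℝ E) (a : E) : Set E :=
  K.space \ ⋃ s ∈ {s ∈ K.faces | a ∉ s}, convexHull ℝ (s : Set E)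

end Paper

/-!
Take a dense sequence `u` and, for all `a m`, a separator `T` between
`closedBall (u a) (1 / (m + 1))` and the complement of `ball (u a) (2 / (m + 1))`; let `A` be the
union of these countably many closed sets. In a fibre minus `A`, the side of each separation that
contains the small ball is relatively clopen and lies in the big ball, so these sides form a
clopen base and the fibre minus `A` is zero-dimensional.

That `dim A ≤ k - 1` is the countable sum theorem for closed sets `F i` in a separable metric
space. A given cover is modified step by step: step `i` lowers the order near `F i` by swelling a
refinement of the trace of the cover on `F i`, and changes the cover only within distance
`1 / (i + 1)` of the region not yet handled. Hence the modifications stabilise locally, and their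
limit is an open refinement of the required order.
-/

open Metric TopologicalSpace

namespace Paper

section Order

variable {α ι : Type*}

lemma orderLE_iff_encard_le {c : Set (Set α)} {k : ℕ} :
    OrderLE c k ↔ ∀ x, {u ∈ c | x ∈ u}.encard ≤ k := by
  simp only [OrderLE, encard_le_coe_iff_finite_ncard_le]

lemma orderLE_range {V : ι → Set α} {k : ℕ} (hV : ∀ x, {j | x ∈ V j}.encard ≤ k) :
    OrderLE (range V) k := by
  refine orderLE_iff_encard_le.2 fun x => ?_
  calc {u ∈ range V | x ∈ u}.encard ≤ (V '' {j | x ∈ V j}).encard :=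
        encard_le_encard fun _ ⟨⟨j, hj⟩, hx⟩ => ⟨j, show x ∈ V j from hj ▸ hx, hj⟩
    _ ≤ k := (encard_image_le _ _).trans (hV x)

lemma encard_le_of_forall_finset {s : Set α} {k : ℕ}
    (h : ∀ t : Finset α, ↑t ⊆ s → t.card ≤ k) : s.encard ≤ k := by
  by_contra! hs
  obtain ⟨t, hts, ht⟩ := exists_subset_encard_eq (Order.add_one_le_of_lt hs)
  have htf : t.Finite := finite_of_encard_eq_coe (k := k + 1) (by simpa using ht)
  have := h htf.toFinset (by simpa using hts)
  rw [← ENat.natCast_le_natCast, ← encard_coe_eq_coe_finsetCard, htf.coe_toFinset, ht] at this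
  exact absurd this (by simpa using ENat.natCast_lt_natCast.2 k.lt_succ_self)

end Order

lemma exists_seq_of_forall_exists {α : Type*} (P : α → Prop) (R : ℕ → α → α → Prop) {a : α}
    (ha : P a) (h : ∀ i a, P a → ∃ b, P b ∧ R i a b) :
    ∃ s : ℕ → α, s 0 = a ∧ (∀ i, P (s i)) ∧ ∀ i, R i (s i) (s (i + 1)) := by
  choose! next hnextP hnextR using h
  let s : ℕ → α := fun i => Nat.rec a (fun i b => next i b) i
  have hs : ∀ i, P (s i) := fun i => Nat.rec ha (fun i hi => hnextP i _ hi) i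
  exact ⟨s, rfl, hs, fun i => hnextR i _ (hs i)⟩

section CovDim

variable {Z W : Type*} [TopologicalSpace Z] [TopologicalSpace W] {n : ℤ}

lemma covDimLE_of_isEmpty [IsEmpty Z] (n : ℤ) : CovDimLE Z n := fun _ _ _ =>
  ⟨∅, by simp, by simp [eq_empty_of_isEmpty (univ : Set Z)], by simp, isEmptyElim⟩

lemma CovDimLE.of_homeomorph (h : CovDimLE Z n) (e : Z ≃ₜ W) : CovDimLE W n := by
  intro c hc hcov
  obtain ⟨d, hdo, hdcov, hdref, hdord⟩ := h (preimage e '' c)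
    (forall_mem_image.2 fun u hu => (hc u hu).preimage e.continuous)
    (by rw [sUnion_image, ← preimage_iUnion₂, ← sUnion_eq_biUnion, hcov, preimage_univ])
  refine ⟨preimage e.symm '' d,
    forall_mem_image.2 fun v hv => (hdo v hv).preimage e.symm.continuous,
    by rw [sUnion_image, ← preimage_iUnion₂, ← sUnion_eq_biUnion, hdcov, preimage_univ],
    forall_mem_image.2 fun v hv => ?_, orderLE_iff_encard_le.2 fun w => ?_⟩
  · obtain ⟨_, ⟨u, hu, rfl⟩, hvu⟩ := hdref v hv
    exact ⟨u, hu, fun w hw => by simpa using hvu hw⟩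
  · calc {v ∈ preimage e.symm '' d | w ∈ v}.encard
        ≤ (preimage e.symm '' {v ∈ d | e.symm w ∈ v}).encard :=
          encard_le_encard fun _ ⟨⟨v, hv, hve⟩, hw⟩ => ⟨v, ⟨hv, by rwa [← hve] at hw⟩, hve⟩
      _ ≤ _ := (encard_image_le _ _).trans (orderLE_iff_encard_le.1 hdord _)

lemma CovDimLE.exists_shrinking {ι : Type*} (h : CovDimLE Z n) (U : ι → Set Z)
    (hU : ∀ j, IsOpen (U j)) (hcov : ⋃ j, U j = univ) :
    ∃ V : ι → Set Z, (∀ j, IsOpen (V j)) ∧ (∀ j, V j ⊆ U j) ∧ ⋃ j, V j = univ ∧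
      ∀ x, {j | x ∈ V j}.encard ≤ (n + 1).toNat := by
  rcases isEmpty_or_nonempty ι with hι | hι
  · exact ⟨U, hU, fun _ => subset_rfl, hcov, fun x => by simp [eq_empty_of_isEmpty]⟩
  obtain ⟨d, hdo, hdcov, hdref, hdord⟩ :=
    h (range U) (forall_mem_range.2 hU) (by rwa [sUnion_range])
  choose! J hJ using fun v hv => exists_range_iff.1 (hdref v hv)
  refine ⟨fun j => ⋃₀ {v ∈ d | J v = j}, fun j => isOpen_sUnion fun v hv => hdo v hv.1,
    fun j => sUnion_subset fun v hv => hv.2 ▸ hJ v hv.1, ?_, fun x => ?_⟩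
  · refine eq_univ_of_forall fun x => ?_
    obtain ⟨v, hv, hxv⟩ := sUnion_eq_univ_iff.1 hdcov x
    exact mem_iUnion.2 ⟨J v, v, ⟨hv, rfl⟩, hxv⟩
  · calc {j | x ∈ ⋃₀ {v ∈ d | J v = j}}.encard ≤ (J '' {v ∈ d | x ∈ v}).encard :=
        encard_le_encard fun _ ⟨v, ⟨hv, hvj⟩, hxv⟩ => ⟨v, ⟨hv, hxv⟩, hvj⟩
      _ ≤ _ := (encard_image_le _ _).trans (orderLE_iff_encard_le.1 hdord x)

lemma exists_seq_subcover [SecondCountableTopology Z] [Nonempty Z] {c : Set (Set Z)}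
    (hc : ∀ u ∈ c, IsOpen u) (hcov : ⋃₀ c = univ) :
    ∃ U : ℕ → Set Z, (∀ j, U j ∈ c) ∧ ⋃ j, U j = univ := by
  obtain ⟨c', hc'c, hc', hcov'⟩ := isOpen_sUnion_countable c hc
  obtain ⟨U, rfl⟩ := hc'c.exists_eq_range (Nonempty.of_sUnion_eq_univ (hcov' ▸ hcov))
  exact ⟨U, fun j => hc' (mem_range_self j), by rw [← sUnion_range, hcov', hcov]⟩

lemma covDimLE_of_forall_seq [SecondCountableTopology Z]
    (h : ∀ U : ℕ → Set Z, (∀ j, IsOpen (U j)) → ⋃ j, U j = univ →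
      ∃ V : ℕ → Set Z, (∀ m, IsOpen (V m)) ∧ (∀ m, ∃ j, V m ⊆ U j) ∧ ⋃ m, V m = univ ∧
        ∀ x, {m | x ∈ V m}.encard ≤ (n + 1).toNat) :
    CovDimLE Z n := by
  rcases isEmpty_or_nonempty Z with hZ | hZ
  · exact covDimLE_of_isEmpty n
  intro c hc hcov
  obtain ⟨U, hUc, hUcov⟩ := exists_seq_subcover hc hcov
  obtain ⟨V, hV, hVU, hVcov, hVord⟩ := h U (fun j => hc _ (hUc j)) hUcov
  refine ⟨range V, forall_mem_range.2 hV, by rwa [sUnion_range],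
    forall_mem_range.2 fun m => ?_, orderLE_range hVord⟩
  obtain ⟨j, hj⟩ := hVU m
  exact ⟨U j, hUc j, hj⟩

lemma covDimLE_zero_of_isTopologicalBasis_isClopen [SecondCountableTopology Z]
    (hB : IsTopologicalBasis {E : Set Z | IsClopen E}) : CovDimLE Z 0 := by
  rcases isEmpty_or_nonempty Z with hZ | hZ
  · exact covDimLE_of_isEmpty 0
  intro c hc hcov
  obtain ⟨E, hE, hEcov⟩ := exists_seq_subcover (c := {E | IsClopen E ∧ ∃ u ∈ c, E ⊆ u})
    (fun E hE => hE.1.isOpen) <| sUnion_eq_univ_iff.2 fun x => by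
      obtain ⟨u, hu, hxu⟩ := sUnion_eq_univ_iff.1 hcov x
      obtain ⟨E, hE, hxE, hEu⟩ := hB.exists_subset_of_mem_open hxu (hc u hu)
      exact ⟨E, ⟨hE, u, hu, hEu⟩, hxE⟩
  refine ⟨range (disjointed E), forall_mem_range.2 fun m => ?_,
    by rw [sUnion_range, iUnion_disjointed, hEcov], forall_mem_range.2 fun m => ?_,
    orderLE_range (k := 1) fun x => encard_le_one_iff.2 fun i j hi hj => ?_⟩
  · rw [disjointed_eq_inter_compl]
    exact (hE m).1.isOpen.inter <|
      (finite_lt_nat m).isOpen_biInter fun j _ => (hE j).1.isClosed.isOpen_compl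
  · obtain ⟨u, hu, hEu⟩ := (hE m).2
    exact ⟨u, hu, (disjointed_subset E m).trans hEu⟩
  · by_contra hij
    exact disjoint_left.1 (disjoint_disjointed E hij) hi hj

end CovDim

lemma exists_shrinking_of_isClosed {Z ι : Type*} [TopologicalSpace Z] {n : ℤ} {F : Set Z}
    (hF : IsClosed F) (hFd : CovDimLE F n) (V : ι → Set Z) (hV : ∀ j, IsOpen (V j))
    (hcov : ⋃ j, V j = univ) :
    ∃ W : ι → Set Z, (∀ j, W j ⊆ F ∩ V j) ∧ (∀ j, IsClosed (F \ W j)) ∧ F ⊆ ⋃ j, W j ∧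
      ∀ y, {j | y ∈ W j}.encard ≤ (n + 1).toNat := by
  obtain ⟨W, hWo, hWV, hWcov, hWord⟩ := hFd.exists_shrinking (fun j => (↑) ⁻¹' V j)
    (fun j => (hV j).preimage continuous_subtype_val)
    (by rw [← preimage_iUnion, hcov, preimage_univ])
  refine ⟨fun j => (↑) '' W j, fun j => ?_, fun j => ?_, fun y hy => ?_, fun y => ?_⟩
  · rintro _ ⟨p, hp, rfl⟩
    exact ⟨p.2, hWV j hp⟩
  · rw [← image_val_compl]
    exact hF.isClosedMap_subtype_val _ (hWo j).isClosed_compl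
  · obtain ⟨j, hj⟩ := mem_iUnion.1 (hWcov.symm ▸ mem_univ (⟨y, hy⟩ : F))
    exact mem_iUnion.2 ⟨j, ⟨y, hy⟩, hj, rfl⟩
  · by_cases hy : y ∈ F
    · refine (encard_le_encard (t := {j | ⟨y, hy⟩ ∈ W j}) ?_).trans (hWord ⟨y, hy⟩)
      rintro j ⟨p, hp, rfl⟩
      exact hp
    · have : {j | y ∈ ((↑) '' W j : Set Z)} = ∅ :=
        eq_empty_of_forall_notMem fun j ⟨p, _, hpy⟩ => hy (hpy ▸ p.2)
      simp only [this, encard_empty, zero_le]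

lemma encard_setOf_infEDist_lt_le {α ι : Type*} [PseudoEMetricSpace α] {F : Set α}
    {W : ι → Set α} (hWF : ∀ j, W j ⊆ F) {k : ℕ} (hW : ∀ y, {j | y ∈ W j}.encard ≤ k) (x : α) :
    {j | infEDist x (W j) < infEDist x (F \ W j)}.encard ≤ k := by
  refine encard_le_of_forall_finset fun σ hσ => ?_
  rcases σ.eq_empty_or_nonempty with rfl | hne
  · simp
  obtain ⟨j₀, -, hmin⟩ := σ.exists_min_image (fun j => infEDist x (W j)) hne
  obtain ⟨y, hy, hxy⟩ := infEDist_lt_iff.1 <|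
    (Finset.lt_inf'_iff (f := fun j => infEDist x (F \ W j)) hne).2
      fun j hj => (hmin j hj).trans_lt (hσ hj)
  have hyσ : ↑σ ⊆ {j | y ∈ W j} := fun j hj => by
    by_contra hyj
    exact hxy.not_ge <| (Finset.inf'_le _ hj).trans (infEDist_le_edist_of_mem ⟨hWF _ hy, hyj⟩)
  exact ENat.natCast_le_natCast.1 <| by
    simpa using (encard_le_encard hyσ).trans (hW y)

lemma exists_cover_modification {Z ι : Type*} [TopologicalSpace Z] [NormalSpace Z] {k : ℕ}
    {V G : ι → Set Z} {Ω F O : Set Z} (hV : ∀ j, IsOpen (V j)) (hVcov : ⋃ j, V j = univ)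
    (hΩ : IsOpen Ω) (hΩord : ∀ x ∈ Ω, {j | x ∈ V j}.encard ≤ k)
    (hG : ∀ j, IsOpen (G j)) (hGV : ∀ j, G j ⊆ V j) (hGord : ∀ x, {j | x ∈ G j}.encard ≤ k)
    (hF : IsClosed F) (hFG : F ⊆ ⋃ j, G j) (hO : IsOpen O) (hFO : F ⊆ O) :
    ∃ (V' : ι → Set Z) (Ω' : Set Z), (∀ j, IsOpen (V' j)) ∧ (∀ j, V' j ⊆ V j) ∧
      ⋃ j, V' j = univ ∧ IsOpen Ω' ∧ Ω ∪ F ⊆ Ω' ∧ (∀ x ∈ Ω', {j | x ∈ V' j}.encard ≤ k) ∧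
      ∀ y ∉ O, ∀ j, y ∈ V j → y ∈ V' j := by
  obtain ⟨N₂, hN₂, hFN₂, hN₂GO⟩ := normal_exists_closure_subset hF
    ((isOpen_iUnion hG).inter hO) (subset_inter hFG hFO)
  obtain ⟨N₁, hN₁, hFN₁, hN₁N₂⟩ := normal_exists_closure_subset hF hN₂ hFN₂
  -- `V'` is `G` near `F` and `V` away from it, the two regimes overlapping on `N₂ \ closure N₁`
  refine ⟨fun j => G j ∩ N₂ ∪ V j \ closure N₁, Ω ∪ N₁,
    fun j => ((hG j).inter hN₂).union ((hV j).sdiff isClosed_closure),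
    fun j => union_subset (inter_subset_left.trans (hGV j)) sdiff_subset, ?_, hΩ.union hN₁,
    union_subset_union_right Ω hFN₁, fun x hx => ?_, fun y hyO j hyV => ?_⟩
  · refine eq_univ_of_forall fun x => ?_
    by_cases hx : x ∈ closure N₁
    · obtain ⟨j, hj⟩ := mem_iUnion.1 (hN₂GO (subset_closure (hN₁N₂ hx))).1
      exact mem_iUnion.2 ⟨j, .inl ⟨hj, hN₁N₂ hx⟩⟩
    · obtain ⟨j, hj⟩ := mem_iUnion.1 (hVcov.symm ▸ mem_univ x)
      exact mem_iUnion.2 ⟨j, .inr ⟨hj, hx⟩⟩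
  · by_cases hx₁ : x ∈ closure N₁
    · refine (encard_le_encard fun j hj => ?_).trans (hGord x)
      exact hj.elim (·.1) fun h => (h.2 hx₁).elim
    · have hxΩ : x ∈ Ω := hx.resolve_right fun h => hx₁ (subset_closure h)
      refine (encard_le_encard fun j hj => ?_).trans (hΩord x hxΩ)
      exact hj.elim (hGV j ·.1) (·.1)
  · exact .inr ⟨hyV, fun hy => hyO (hN₂GO (subset_closure (hN₁N₂ hy))).2⟩

lemma exists_cover_modification_of_covDimLE {Z ι : Type*} [MetricSpace Z] {n : ℤ}
    {V : ι → Set Z} {Ω F O : Set Z} (hV : ∀ j, IsOpen (V j)) (hVcov : ⋃ j, V j = univ)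
    (hΩ : IsOpen Ω) (hΩord : ∀ x ∈ Ω, {j | x ∈ V j}.encard ≤ (n + 1).toNat)
    (hF : IsClosed F) (hFd : CovDimLE F n) (hO : IsOpen O) (hFO : F \ Ω ⊆ O) :
    ∃ (V' : ι → Set Z) (Ω' : Set Z), (∀ j, IsOpen (V' j)) ∧ (∀ j, V' j ⊆ V j) ∧
      ⋃ j, V' j = univ ∧ IsOpen Ω' ∧ Ω ∪ F ⊆ Ω' ∧
      (∀ x ∈ Ω', {j | x ∈ V' j}.encard ≤ (n + 1).toNat) ∧
      ∀ y ∉ O, ∀ j, y ∈ V j → y ∈ V' j := by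
  obtain ⟨W, hWFV, hWc, hFW, hWord⟩ := exists_shrinking_of_isClosed hF hFd V hV hVcov
  have hWD : ∀ j, W j ⊆ {x | infEDist x (W j) < infEDist x (F \ W j)} := fun j y hy => by
    rw [mem_ofPred_eq, infEDist_zero_of_mem hy, infEDist_pos_iff_notMem_closure,
      (hWc j).closure_eq]
    exact fun h => h.2 hy
  rw [← union_sdiff_self]
  refine exists_cover_modification hV hVcov hΩ hΩord
    (G := fun j => {x | infEDist x (W j) < infEDist x (F \ W j)} ∩ V j)
    (fun j => (isOpen_lt continuous_infEDist continuous_infEDist).inter (hV j))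
    (fun j => inter_subset_right)
    (fun x => (encard_le_encard fun j hj => hj.1).trans
      (encard_setOf_infEDist_lt_le (fun j => (hWFV j).trans inter_subset_left) hWord x))
    (hF.sdiff hΩ) (fun y hy => ?_) hO hFO
  obtain ⟨j, hj⟩ := mem_iUnion.1 (hFW hy.1)
  exact mem_iUnion.2 ⟨j, hWD j hj, ((hWFV j) hj).2⟩

lemma exists_eventually_forall_mem_succ {Z ι : Type*} [PseudoMetricSpace Z]
    {V : ℕ → ι → Set Z} {Ω : ℕ → Set Z} (hΩ : ∀ i, IsOpen (Ω i)) (hmono : Monotone Ω)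
    (hΩcov : ⋃ i, Ω i = univ)
    (hV : ∀ i : ℕ, ∀ y ∉ thickening (1 / ((i : ℝ) + 1)) (Ω i)ᶜ, ∀ j, y ∈ V i j → y ∈ V (i + 1) j)
    (x : Z) : ∃ L, ∀ᶠ y in 𝓝 x, ∀ l ≥ L, ∀ j, y ∈ V l j → y ∈ V (l + 1) j := by
  obtain ⟨i, hi⟩ := mem_iUnion.1 (hΩcov.symm ▸ mem_univ x)
  obtain ⟨δ, hδ, hδΩ⟩ := Metric.isOpen_iff.1 (hΩ i) x hi
  obtain ⟨m, hm⟩ := exists_nat_one_div_lt (half_pos hδ)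
  refine ⟨max i m, Filter.eventually_of_mem (ball_mem_nhds x (half_pos hδ))
    fun y hy l hl => hV l y ?_⟩
  rw [mem_thickening_iff]
  rintro ⟨z, hzΩ, hyz⟩
  have hlm : 1 / ((l : ℝ) + 1) ≤ 1 / (m + 1) := Nat.one_div_le_one_div (le_of_max_le_right hl)
  refine hzΩ (hmono (le_of_max_le_left hl) (hδΩ ?_))
  rw [mem_ball] at hy ⊢
  linarith [dist_triangle_left z x y]

lemma exists_limit_cover {Z ι : Type*} [TopologicalSpace Z] {k : ℕ} {V : ℕ → ι → Set Z}
    {Ω : ℕ → Set Z} (hV : ∀ i j, IsOpen (V i j)) (hcov : ∀ i, ⋃ j, V i j = univ)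
    (hanti : ∀ i j, V (i + 1) j ⊆ V i j) (hΩcov : ⋃ i, Ω i = univ)
    (hord : ∀ i, ∀ x ∈ Ω i, {j | x ∈ V i j}.encard ≤ k)
    (hstab : ∀ x, ∃ L, ∀ᶠ y in 𝓝 x, ∀ l ≥ L, ∀ j, y ∈ V l j → y ∈ V (l + 1) j) :
    ∃ W : ι → Set Z, (∀ j, IsOpen (W j)) ∧ (∀ j, W j ⊆ V 0 j) ∧ ⋃ j, W j = univ ∧
      ∀ x, {j | x ∈ W j}.encard ≤ k := by
  have hstab' : ∀ x, ∃ L, ∀ᶠ y in 𝓝 x, ∀ j, y ∈ V L j → y ∈ ⋂ i, V i j := fun x => by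
    obtain ⟨L, hL⟩ := hstab x
    refine ⟨L, hL.mono fun y hy j hyL => mem_iInter.2 fun i => ?_⟩
    rcases le_total i L with hiL | hLi
    · exact antitone_nat_of_succ_le (f := (V · j)) (fun i => hanti i j) hiL hyL
    · induction i, hLi using Nat.le_induction with
      | base => exact hyL
      | succ l hLl ih => exact hy l hLl j ih
  refine ⟨fun j => ⋂ i, V i j, fun j => isOpen_iff_mem_nhds.2 fun x hx => ?_,
    fun j => iInter_subset _ 0, eq_univ_of_forall fun x => ?_, fun x => ?_⟩
  · obtain ⟨L, hL⟩ := hstab' x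
    filter_upwards [hL, (hV L j).mem_nhds (mem_iInter.1 hx L)] with y hy hyL using hy j hyL
  · obtain ⟨L, hL⟩ := hstab' x
    obtain ⟨j, hj⟩ := mem_iUnion.1 ((hcov L).symm ▸ mem_univ x)
    exact mem_iUnion.2 ⟨j, hL.self_of_nhds j hj⟩
  · obtain ⟨i, hi⟩ := mem_iUnion.1 (hΩcov.symm ▸ mem_univ x)
    refine (encard_le_encard (t := {j | x ∈ V i j}) fun j hj => ?_).trans (hord i x hi)
    exact (mem_iInter (s := (V · j))).1 hj i

theorem covDimLE_of_iUnion_eq_univ {Z : Type*} [MetricSpace Z] [SecondCountableTopology Z]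
    {n : ℤ} {F : ℕ → Set Z} (hF : ∀ i, IsClosed (F i)) (hFd : ∀ i, CovDimLE (F i) n)
    (hFU : ⋃ i, F i = univ) : CovDimLE Z n := by
  refine covDimLE_of_forall_seq fun U hU hUcov => ?_
  let P : (ℕ → Set Z) × Set Z → Prop := fun s =>
    (∀ j, IsOpen (s.1 j)) ∧ ⋃ j, s.1 j = univ ∧ IsOpen s.2 ∧
      ∀ x ∈ s.2, {j | x ∈ s.1 j}.encard ≤ (n + 1).toNat
  let R : ℕ → (ℕ → Set Z) × Set Z → (ℕ → Set Z) × Set Z → Prop := fun i s s' =>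
    (∀ j, s'.1 j ⊆ s.1 j) ∧ s.2 ∪ F i ⊆ s'.2 ∧
      ∀ y ∉ thickening (1 / ((i : ℝ) + 1)) s.2ᶜ, ∀ j, y ∈ s.1 j → y ∈ s'.1 j
  obtain ⟨s, hs₀, hP, hR⟩ := exists_seq_of_forall_exists P R (a := (U, ∅))
    ⟨hU, hUcov, isOpen_empty, by simp⟩ fun i ⟨V, Ω⟩ ⟨hV, hVcov, hΩ, hΩord⟩ => by
      obtain ⟨V', Ω', hV', hV'V, hV'cov, hΩ', hΩΩ', hΩ'ord, hV'out⟩ :=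
        exists_cover_modification_of_covDimLE hV hVcov hΩ hΩord (hF i) (hFd i)
          isOpen_thickening
          (sdiff_subset_compl _ _ |>.trans (self_subset_thickening Nat.one_div_pos_of_nat _))
      exact ⟨(V', Ω'), ⟨hV', hV'cov, hΩ', hΩ'ord⟩, hV'V, hΩΩ', hV'out⟩
  simp only [P, R, forall_and] at hP hR
  obtain ⟨hV, hVcov, hΩ, hΩord⟩ := hP
  obtain ⟨hanti, hΩF, hVout⟩ := hR
  have hΩcov : ⋃ i, (s i).2 = univ := eq_univ_of_forall fun x => by
    obtain ⟨i, hi⟩ := mem_iUnion.1 (hFU.symm ▸ mem_univ x)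
    exact mem_iUnion.2 ⟨i + 1, hΩF i (.inr hi)⟩
  obtain ⟨W, hW, hWV, hWcov, hWord⟩ := exists_limit_cover hV hVcov hanti hΩcov hΩord <|
    exists_eventually_forall_mem_succ hΩ
      (monotone_nat_of_le_succ fun i => subset_union_left.trans (hΩF i)) hΩcov hVout
  exact ⟨W, hW, fun j => ⟨j, (hWV j).trans (by rw [hs₀])⟩, hWcov, hWord⟩

theorem dimLE_iUnion {X : Type*} [MetricSpace X] [SecondCountableTopology X] {n : ℤ}
    {K : ℕ → Set X} (hK : ∀ i, IsClosed (K i)) (hKd : ∀ i, DimLE (K i) n) :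
    DimLE (⋃ i, K i) n :=
  covDimLE_of_iUnion_eq_univ (F := fun i => Subtype.val ⁻¹' K i)
    (fun i => (hK i).preimage continuous_subtype_val)
    (fun i => CovDimLE.of_homeomorph (hKd i)
      (IsEmbedding.subtypeVal.homeomorphOfSubsetRange
        (by rw [Subtype.range_coe]; exact subset_iUnion K i)).symm)
    (iUnion_eq_univ_iff.2 fun x => (mem_iUnion (s := K)).1 x.2)

lemma Separates.exists_isClopen {X : Type*} [TopologicalSpace X] {Z T B C S : Set X}
    (h : Separates Z T B C) (hS : S ⊆ Z \ T) :
    ∃ E : Set S, IsClopen E ∧ {x | ↑x ∈ B} ⊆ E ∧ ∀ x ∈ E, ↑x ∉ C := by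
  obtain ⟨U, V, hU, hV, hUV, hdisj, hBU, hCV⟩ := h
  have hUV' : ∀ x : S, (x : X) ∈ U ↔ (x : X) ∉ V := fun x =>
    ⟨fun hxU hxV => disjoint_left.1 hdisj ⟨hxU, hS x.2⟩ ⟨hxV, hS x.2⟩,
      fun hxV => (hUV (hS x.2)).resolve_right hxV⟩
  have hUV'' : (Subtype.val ⁻¹' U : Set S) = (Subtype.val ⁻¹' V)ᶜ := ext hUV'
  refine ⟨Subtype.val ⁻¹' U, ⟨hUV'' ▸ (hV.preimage continuous_subtype_val).isClosed_compl,
    hU.preimage continuous_subtype_val⟩, fun x hx => (hBU ⟨(hS x.2).1, hx⟩).1,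
    fun x hxU hxC => (hUV' x).1 hxU (hCV ⟨(hS x.2).1, hxC⟩).1⟩

lemma isTopologicalBasis_isClopen_of_separates {X ι : Type*} [TopologicalSpace X]
    {Z S : Set X} {B C T : ι → Set X}
    (hBC : ∀ x ∈ S, ∀ O ∈ 𝓝 x, ∃ p, x ∈ B p ∧ (C p)ᶜ ⊆ O)
    (hT : ∀ p, Separates Z (T p) (B p) (C p)) (hS : ∀ p, S ⊆ Z \ T p) :
    IsTopologicalBasis {E : Set S | IsClopen E} := by
  refine isTopologicalBasis_of_isOpen_of_nhds (fun E hE => hE.isOpen) fun x O hxO hO => ?_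
  obtain ⟨O', hO', rfl⟩ := isOpen_induced_iff.1 hO
  obtain ⟨p, hxB, hCO⟩ := hBC x x.2 O' (hO'.mem_nhds hxO)
  obtain ⟨E, hE, hBE, hEC⟩ := (hT p).exists_isClopen (hS p)
  exact ⟨E, hE, hBE hxB, fun z hz => hCO (hEC z hz)⟩

lemma exists_mem_closedBall_ball_subset {X : Type*} [PseudoMetricSpace X] {u : ℕ → X}
    (hu : DenseRange u) {x : X} {O : Set X} (hO : O ∈ 𝓝 x) :
    ∃ a m : ℕ, x ∈ closedBall (u a) (1 / (m + 1)) ∧ ball (u a) (2 / (m + 1)) ⊆ O := by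
  obtain ⟨ρ, hρ, hρO⟩ := Metric.mem_nhds_iff.1 hO
  obtain ⟨m, hm⟩ := exists_nat_one_div_lt (div_pos hρ three_pos)
  obtain ⟨a, ha⟩ := Metric.denseRange_iff.1 hu x _ Nat.one_div_pos_of_nat
  refine ⟨a, m, ha.le, fun z hz => hρO ?_⟩
  rw [mem_ball] at hz ⊢
  have : (2 : ℝ) / (m + 1) = 2 * (1 / (m + 1)) := by ring
  linarith [dist_triangle z (u a) x, dist_comm x (u a)]

end Paper

theorem stmt1_general {X Y : Type*} [MetricSpace X] [CompactSpace X]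
    (f : X → Y) (k : ℕ)
    (hsep : ∀ B C : Set X, IsClosed B → IsClosed C → Disjoint B C →
      ∃ T : Set X, IsClosed T ∧ Paper.DimLE T ((k : ℤ) - 1) ∧
        ∀ y : Y, Paper.Separates (f ⁻¹' {y}) T B C) :
    ∃ A : Set X, Paper.IsSigmaCompact' A ∧ Paper.DimLE A ((k : ℤ) - 1) ∧
      ∀ y : Y, Paper.DimLE (f ⁻¹' {y} \ A) 0 := by
  rcases isEmpty_or_nonempty X with hX | hX
  · exact ⟨∅, ⟨fun _ => ∅, fun _ => isCompact_empty, iUnion_empty.symm⟩,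
      Paper.covDimLE_of_isEmpty _, fun _ => Paper.covDimLE_of_isEmpty _⟩
  obtain ⟨u, hu⟩ := exists_dense_seq X
  let B : ℕ → Set X := fun p => closedBall (u p.unpair.1) (1 / (p.unpair.2 + 1))
  let C : ℕ → Set X := fun p => (ball (u p.unpair.1) (2 / (p.unpair.2 + 1)))ᶜ
  have hBC : ∀ p, Disjoint (B p) (C p) := fun p =>
    disjoint_compl_right_iff_subset.2 (closedBall_subset_ball (by gcongr; norm_num))
  choose T hTc hTd hTsep using fun p =>
    hsep (B p) (C p) isClosed_closedBall isOpen_ball.isClosed_compl (hBC p)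
  refine ⟨⋃ p, T p, ⟨T, fun p => (hTc p).isCompact, rfl⟩, Paper.dimLE_iUnion hTc hTd,
    fun y => Paper.covDimLE_zero_of_isTopologicalBasis_isClopen <|
      Paper.isTopologicalBasis_isClopen_of_separates (fun x _ O hO => ?_) (hTsep · y)
        fun p => sdiff_subset_sdiff_right (subset_iUnion T p)⟩
  obtain ⟨a, m, hx, hO⟩ := Paper.exists_mem_closedBall_ball_subset hu hO
  exact ⟨Nat.pair a m, by simpa [B] using hx, by simpa [C] using hO⟩

/-- Lemma 1. -/
theorem stmt1 {X Y : Type*} [MetricSpace X] [CompactSpace X] [MetricSpace Y] [CompactSpace Y]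
    (f : X → Y) (hf : Continuous f) (k : ℕ)
    (hsep : ∀ B C : Set X, IsClosed B → IsClosed C → Disjoint B C →
      ∃ T : Set X, IsClosed T ∧ Paper.DimLE T ((k : ℤ) - 1) ∧
        ∀ y : Y, Paper.Separates (f ⁻¹' {y}) T B C) :
    ∃ A : Set X, Paper.IsSigmaCompact' A ∧ Paper.DimLE A ((k : ℤ) - 1) ∧
      ∀ y : Y, Paper.DimLE (f ⁻¹' {y} \ A) 0 :=
  stmt1_general f k hsep
end
end

section
/- Let f : X → Y be a continuous map between compact metrizable spaces, and let B, C be disjoint closed subsets of X. Suppose there is a family of sets U(i), V(i) ⊆ X open and F(i) ⊆ Y closed, indexed by all finite sequences i of positive integers (including the empty sequence *), satisfying: (a) the closures of U(i) and V(i) are disjoint; (b) U(*) ⊇ B, V(*) ⊇ C, F(*) = Y; (c) U(i,p) ⊇ U(i) ∩ f⁻¹(F(i,p)) and V(i,p) ⊇ V(i) ∩ f⁻¹(F(i,p)) for all p; (d) F(i) ⊆ ⋃_p F(i,p) and diam F(i) < 1/|i| for nonempty i; (e) the set E(i) = f⁻¹(F(i)) ∖ (U(i) ∪ V(i)) admits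 an open cover of order ≤ k and mesh ≤ 1/(1+|i|); (f) for each i the family {E(i,p) : p ∈ ℕ} is discrete in X. Then there exists a closed subset T of X with dim T ≤ k−1 such that for every y ∈ Y, T separates f⁻¹(y) between B and C. -/
open Set Topology

noncomputable section

/-- Lemma 2. Finite sequences of positive integers are modelled by `List ℕ`
(appending `p` to `i` is `i ++ [p]`, the empty sequence is `[]`). -/
theorem stmt4 {X Y : Type*} [MetricSpace X] [CompactSpace X] [MetricSpace Y] [CompactSpace Y]
    (f : X → Y) (hf : Continuous f) (k : ℕ)
    (B C : Set X) (hB : IsClosed B) (hC : IsClosed C) (hBC : Disjoint B C)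
    (U V : List ℕ → Set X) (F : List ℕ → Set Y)
    (ha : ∀ i, IsClosed (F i) ∧ IsOpen (U i) ∧ IsOpen (V i) ∧
      Disjoint (closure (U i)) (closure (V i)))
    (hb : B ⊆ U [] ∧ C ⊆ V [] ∧ F [] = Set.univ)
    (hc : ∀ i p, U i ∩ f ⁻¹' F (i ++ [p]) ⊆ U (i ++ [p]) ∧
      V i ∩ f ⁻¹' F (i ++ [p]) ⊆ V (i ++ [p]))
    (hd : ∀ i, F i ⊆ ⋃ p : ℕ, F (i ++ [p]) ∧
      (i ≠ [] → Metric.diam (F i) < 1 / (i.length : ℝ)))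
    (he : ∀ i, Paper.AdmitsSmallCover (f ⁻¹' F i \ (U i ∪ V i)) k (1 / (1 + i.length : ℝ)))
    (hf' : ∀ i, Paper.DiscreteFamily
      (fun p : ℕ => f ⁻¹' F (i ++ [p]) \ (U (i ++ [p]) ∪ V (i ++ [p])))) :
    ∃ T : Set X, IsClosed T ∧ Paper.DimLE T ((k : ℤ) - 1) ∧
      ∀ y : Y, Paper.Separates (f ⁻¹' {y}) T B C := by
    classical
  obtain ⟨hB0, hC0, hF0⟩ := hb
  set G : List ℕ → Set Y := fun i => ⋂ t ∈ {t : List ℕ | t <+: i}, F t with hGdef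
  have hGclosed : ∀ i, IsClosed (G i) := fun i => isClosed_biInter fun t _ => (ha t).1
  have hGsub : ∀ i t, t <+: i → G i ⊆ F t := fun i t ht => biInter_subset_of_mem ht
  have hGself : ∀ i, G i ⊆ F i := fun i => hGsub i i (List.prefix_refl i)
  have hGconcat : ∀ (i : List ℕ) (p : ℕ), G (i ++ [p]) = G i ∩ F (i ++ [p]) := by
    intro i p
    ext z
    simp only [hGdef, mem_iInter, mem_setOf_eq, mem_inter_iff]
    constructor
    · intro h
      exact ⟨fun t ht => h t (List.prefix_concat_iff.2 (Or.inr ht)),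
        h _ (List.prefix_concat_iff.2 (Or.inl rfl))⟩
    · rintro ⟨h1, h2⟩ t ht
      rcases List.prefix_concat_iff.1 ht with h | h
      · rw [h]; exact h2
      · exact h1 t h
  have hGnil : G [] = univ := by
    apply eq_univ_of_forall
    intro z
    simp only [hGdef, mem_iInter, mem_setOf_eq]
    intro t ht
    rw [List.prefix_nil.1 ht, hF0]
    trivial
  set E' : List ℕ → Set X := fun i => f ⁻¹' G i \ (U i ∪ V i) with hE'def
  have hE'closed : ∀ i, IsClosed (E' i) :=
    fun i => ((hGclosed i).preimage hf).sdiff ((ha i).2.1.union (ha i).2.2.1)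
  have hE'subE : ∀ i, E' i ⊆ f ⁻¹' F i \ (U i ∪ V i) :=
    fun i => diff_subset_diff_left (preimage_mono (hGself i))
  have hE'step : ∀ (i : List ℕ) (p : ℕ), E' (i ++ [p]) ⊆ E' i := by
    intro i p x hx
    obtain ⟨hx1, hx2⟩ := hx
    have hGm : f x ∈ G i ∩ F (i ++ [p]) := by rw [← hGconcat]; exact hx1
    refine ⟨hGm.1, ?_⟩
    rintro (h | h)
    · exact hx2 (Or.inl ((hc i p).1 ⟨h, hGm.2⟩))
    · exact hx2 (Or.inr ((hc i p).2 ⟨h, hGm.2⟩))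
  -- level-n discreteness
  have hdisc : ∀ (n : ℕ) (x : X), ∃ W ∈ 𝓝 x,
      {i : List ℕ | i.length = n ∧ (W ∩ E' i).Nonempty}.Subsingleton := by
    intro n
    induction n with
    | zero =>
      intro x
      refine ⟨univ, Filter.univ_mem, ?_⟩
      rintro i ⟨hi, _⟩ j ⟨hj, _⟩
      rw [List.length_eq_zero_iff.1 hi, List.length_eq_zero_iff.1 hj]
    | succ n ih =>
      intro x
      obtain ⟨W, hW, hWs⟩ := ih x
      by_cases hne : ∃ i : List ℕ, i.length = n ∧ (W ∩ E' i).Nonempty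
      · obtain ⟨i0, hi0len, hi0ne⟩ := hne
        obtain ⟨W', hW', hW's⟩ := hf' i0 x
        refine ⟨W ∩ W', Filter.inter_mem hW hW', ?_⟩
        have key : ∀ a : List ℕ, a.length = n + 1 → ((W ∩ W') ∩ E' a).Nonempty →
            ∃ pa : ℕ, a = i0 ++ [pa] ∧
              (W' ∩ (f ⁻¹' F a \ (U a ∪ V a))).Nonempty := by
          intro a halen hane
          have hne' : a ≠ [] := by intro h; rw [h] at halen; simp at halen
          obtain ⟨z, hz⟩ := hane
          have hda : a.dropLast ++ [a.getLast hne'] = a := List.dropLast_append_getLast hne'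
          have hdalen : a.dropLast.length = n := by
            simp [List.length_dropLast, halen]
          have hzda : z ∈ E' a.dropLast := hE'step _ _ (by rw [hda]; exact hz.2)
          have heq : a.dropLast = i0 :=
            hWs ⟨hdalen, ⟨z, hz.1.1, hzda⟩⟩ ⟨hi0len, hi0ne⟩
          refine ⟨a.getLast hne', by rw [← heq, hda], ⟨z, hz.1.2, hE'subE a hz.2⟩⟩
        rintro a ⟨halen, hane⟩ b ⟨hblen, hbne⟩
        obtain ⟨pa, rfl, hpa2⟩ := key a halen hane
        obtain ⟨pb, rfl, hpb2⟩ := key b hblen hbne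
        have hpq : pa = pb := hW's hpa2 hpb2
        rw [hpq]
      · refine ⟨W, hW, ?_⟩
        rintro a ⟨halen, hane⟩ b _
        exfalso
        have hne' : a ≠ [] := by intro h; rw [h] at halen; simp at halen
        obtain ⟨z, hz⟩ := hane
        have hda : a.dropLast ++ [a.getLast hne'] = a := List.dropLast_append_getLast hne'
        have hdalen : a.dropLast.length = n := by
          simp [List.length_dropLast, halen]
        exact hne ⟨a.dropLast, hdalen, ⟨z, hz.1, hE'step _ _ (by rw [hda]; exact hz.2)⟩⟩
  have hpair : ∀ i j : List ℕ, i.length = j.length → i ≠ j →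
      ∀ x, x ∈ E' i → x ∈ E' j → False := by
    intro i j hlen hij x hxi hxj
    obtain ⟨W, hW, hs⟩ := hdisc i.length x
    exact hij (hs ⟨rfl, ⟨x, mem_of_mem_nhds hW, hxi⟩⟩
      ⟨hlen.symm, ⟨x, mem_of_mem_nhds hW, hxj⟩⟩)
  have hclosedU : ∀ (n : ℕ) (A : Set (List ℕ)), (∀ i ∈ A, i.length = n) →
      IsClosed (⋃ i ∈ A, E' i) := by
    intro n A hA
    rw [← isOpen_compl_iff, isOpen_iff_mem_nhds]
    intro x hx
    obtain ⟨W, hW, hs⟩ := hdisc n x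
    by_cases h : ∃ i ∈ A, (W ∩ E' i).Nonempty
    · obtain ⟨i1, hi1A, hi1⟩ := h
      have hx1 : x ∉ E' i1 := fun h' => hx (mem_biUnion hi1A h')
      refine Filter.mem_of_superset
        (Filter.inter_mem hW ((hE'closed i1).isOpen_compl.mem_nhds hx1)) ?_
      rintro z ⟨hzW, hz1⟩ hz
      obtain ⟨j, hjA, hzj⟩ := mem_iUnion₂.1 hz
      have : j = i1 := hs ⟨hA j hjA, ⟨z, hzW, hzj⟩⟩ ⟨hA i1 hi1A, hi1⟩
      exact hz1 (this ▸ hzj)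
    · refine Filter.mem_of_superset hW ?_
      intro z hzW hz
      obtain ⟨j, hjA, hzj⟩ := mem_iUnion₂.1 hz
      exact h ⟨j, hjA, ⟨z, hzW, hzj⟩⟩
  set Tn : ℕ → Set X := fun n => ⋃ i ∈ {i : List ℕ | i.length = n}, E' i with hTndef
  have hTnclosed : ∀ n, IsClosed (Tn n) := fun n => hclosedU n _ (fun i hi => hi)
  set T : Set X := ⋂ n, Tn n with hTdef
  have hTclosed : IsClosed T := isClosed_iInter hTnclosed
  refine ⟨T, hTclosed, ?_, ?_⟩
  · intro c hcopen hccov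
    have hknat : ((k : ℤ) - 1 + 1).toNat = k := by omega
    rw [hknat]
    by_cases hTe : IsEmpty (↥T)
    · refine ⟨∅, by simp, ?_, by simp, ?_⟩
      · rw [sUnion_empty]
        exact (Set.univ_eq_empty_iff.2 hTe).symm
      · intro x
        have hset : {u ∈ (∅ : Set (Set ↥T)) | x ∈ u} = ∅ := by ext v; simp
        rw [hset]
        simp
    · have hTcomp : IsCompact T := hTclosed.isCompact
      have : CompactSpace ↥T := isCompact_iff_compactSpace.1 hTcomp
      obtain ⟨δ, hδ, hleb⟩ : ∃ δ > 0, ∀ x : ↥T, x ∈ (univ : Set ↥T) →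
          ∃ t ∈ c, Metric.ball x δ ⊆ t := by
        obtain ⟨Vu, hVu, h⟩ := lebesgue_number_lemma_sUnion isCompact_univ hcopen
          (by rw [hccov])
        obtain ⟨δ, hδ, hsub⟩ := Metric.mem_uniformity_dist.1 hVu
        refine ⟨δ, hδ, fun x hx => ?_⟩
        obtain ⟨t, ht, hb⟩ := h x hx
        exact ⟨t, ht, fun y hy => hb (hsub (by simpa [dist_comm] using hy))⟩
      obtain ⟨n, hn⟩ := exists_nat_one_div_lt hδ
      choose cc hcc using he
      set O : List ℕ → Set X := fun i => (⋃ j ∈ {j : List ℕ | j.length = n ∧ j ≠ i}, E' j)ᶜ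
        with hO
      have hOopen : ∀ i, IsOpen (O i) := fun i =>
        (hclosedU n _ (fun j hj => hj.1)).isOpen_compl
      have hOmem : ∀ i, i.length = n → ∀ x, x ∈ E' i → x ∈ O i := by
        intro i hi x hx
        simp only [hO, mem_compl_iff]
        intro hmem
        obtain ⟨j, hj, hxj⟩ := mem_iUnion₂.1 hmem
        exact hpair i j (hi.trans hj.1.symm) (Ne.symm hj.2) x hx hxj
      set d : Set (Set ↥T) := {v | ∃ i u, i.length = n ∧ u ∈ cc i ∧
        v = Subtype.val ⁻¹' (u ∩ O i) ∧ v.Nonempty} with hd'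
      refine ⟨d, ?_, ?_, ?_, ?_⟩
      · rintro v ⟨i, u, hilen, huc, rfl, -⟩
        exact (((hcc i).1 u huc).inter (hOopen i)).preimage continuous_subtype_val
      · apply eq_univ_of_forall
        intro x
        have hxn : (x : X) ∈ Tn n := mem_iInter.1 x.2 n
        obtain ⟨i, hilen, hxi⟩ := mem_iUnion₂.1 hxn
        obtain ⟨u, huc, hxu⟩ := (hcc i).2.1 (hE'subE i hxi)
        have hxO : (x : X) ∈ O i := hOmem i hilen _ hxi
        exact mem_sUnion.2 ⟨Subtype.val ⁻¹' (u ∩ O i),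
          ⟨i, u, hilen, huc, rfl, ⟨x, hxu, hxO⟩⟩, ⟨hxu, hxO⟩⟩
      · rintro v ⟨i, u, hilen, huc, rfl, hvne⟩
        obtain ⟨x0, hx0⟩ := hvne
        obtain ⟨t, htc, hball⟩ := hleb x0 (mem_univ _)
        refine ⟨t, htc, fun z hz => hball ?_⟩
        have hub : Bornology.IsBounded u := isCompact_univ.isBounded.subset (subset_univ u)
        have h1 : dist z x0 ≤ 1 / (1 + (i.length : ℝ)) := by
          rw [Subtype.dist_eq]
          exact le_trans (Metric.dist_le_diam_of_mem hub hz.1 hx0.1) ((hcc i).2.2.1 u huc)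
        have h2 : (1 : ℝ) / (1 + (i.length : ℝ)) = 1 / ((n : ℝ) + 1) := by
          rw [hilen, add_comm]
        rw [Metric.mem_ball]
        calc dist z x0 ≤ 1 / (1 + (i.length : ℝ)) := h1
          _ = 1 / ((n : ℝ) + 1) := h2
          _ < δ := hn
      · intro x
        have hxn : (x : X) ∈ Tn n := mem_iInter.1 x.2 n
        obtain ⟨i0, hi0len, hxi0⟩ := mem_iUnion₂.1 hxn
        have hsub : {v ∈ d | x ∈ v} ⊆
            (fun u => Subtype.val ⁻¹' (u ∩ O i0)) '' {u ∈ cc i0 | (x : X) ∈ u} := by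
          rintro v ⟨⟨i, u, hilen, huc, rfl, -⟩, hxv⟩
          have hxO : (x : X) ∈ O i := hxv.2
          have hii : i = i0 := by
            by_contra hne2
            exact hxO (mem_biUnion (⟨hi0len, Ne.symm hne2⟩ :
              i0 ∈ {j : List ℕ | j.length = n ∧ j ≠ i}) hxi0)
          subst hii
          exact ⟨u, ⟨huc, hxv.1⟩, rfl⟩
        have hfin : {u ∈ cc i0 | (x : X) ∈ u}.Finite := ((hcc i0).2.2.2 (x : X)).1
        have hkk := ((hcc i0).2.2.2 (x : X)).2
        exact ⟨(hfin.image _).subset hsub,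
          le_trans (Set.ncard_le_ncard hsub (hfin.image _))
            (le_trans (Set.ncard_image_le hfin) hkk)⟩
  · -- separation
    intro y
    have hG0 : y ∈ G [] := by rw [hGnil]; trivial
    have hstep : ∀ w : {i : List ℕ // y ∈ G i}, ∃ p : ℕ, y ∈ G (w.1 ++ [p]) := by
      intro w
      obtain ⟨p, hp⟩ := mem_iUnion.1 ((hd w.1).1 (hGself _ w.2))
      exact ⟨p, by rw [hGconcat]; exact ⟨w.2, hp⟩⟩
    choose pch hpch using hstep
    set nxt : {i : List ℕ // y ∈ G i} → {i : List ℕ // y ∈ G i} :=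
      fun w => ⟨w.1 ++ [pch w], hpch w⟩ with hnxt
    set g : ℕ → {i : List ℕ // y ∈ G i} := fun n => nxt^[n] ⟨[], hG0⟩ with hg
    have hgsucc : ∀ n, g (n + 1) = nxt (g n) := fun n =>
      Function.iterate_succ_apply' nxt n ⟨[], hG0⟩
    have hg0 : g 0 = ⟨[], hG0⟩ := rfl
    have hglen : ∀ n, (g n).1.length = n := by
      intro n
      induction n with
      | zero => simp [hg0]
      | succ n ih => rw [hgsucc n]; simp [hnxt, ih]
    set UU : Set X := ⋃ n, U (g n).1 with hUU
    set VV : Set X := ⋃ n, V (g n).1 with hVV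
    have hUmono : ∀ z, f z = y → ∀ n m, n ≤ m → z ∈ U (g n).1 → z ∈ U (g m).1 := by
      intro z hz n m hnm hzn
      induction m, hnm using Nat.le_induction with
      | base => exact hzn
      | succ m hm ih =>
        rw [hgsucc m]
        refine (hc (g m).1 (pch (g m))).1 ⟨ih, ?_⟩
        show f z ∈ F ((g m).1 ++ [pch (g m)])
        rw [hz]
        exact hGself _ (hpch (g m))
    have hVmono : ∀ z, f z = y → ∀ n m, n ≤ m → z ∈ V (g n).1 → z ∈ V (g m).1 := by
      intro z hz n m hnm hzn
      induction m, hnm using Nat.le_induction with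
      | base => exact hzn
      | succ m hm ih =>
        rw [hgsucc m]
        refine (hc (g m).1 (pch (g m))).2 ⟨ih, ?_⟩
        show f z ∈ F ((g m).1 ++ [pch (g m)])
        rw [hz]
        exact hGself _ (hpch (g m))
    refine ⟨UU, VV, isOpen_iUnion fun n => (ha _).2.1, isOpen_iUnion fun n => (ha _).2.2.1,
      ?_, ?_, ?_, ?_⟩
    · rintro z ⟨hzf, hzT⟩
      obtain ⟨n, hn⟩ : ∃ n, z ∉ Tn n := by
        by_contra h
        push_neg at h
        exact hzT (mem_iInter.2 h)
      have hzG : z ∈ f ⁻¹' G (g n).1 := by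
        have : f z = y := hzf
        show f z ∈ G (g n).1
        rw [this]; exact (g n).2
      have hzE : z ∉ E' (g n).1 := fun h => hn (mem_biUnion (hglen n) h)
      have : z ∈ U (g n).1 ∪ V (g n).1 := by
        by_contra h
        exact hzE ⟨hzG, h⟩
      rcases this with h | h
      · exact Or.inl (mem_iUnion.2 ⟨n, h⟩)
      · exact Or.inr (mem_iUnion.2 ⟨n, h⟩)
    · rw [Set.disjoint_left]
      rintro z ⟨hzU, hzf, _⟩ ⟨hzV, _⟩
      obtain ⟨n, hn⟩ := mem_iUnion.1 hzU
      obtain ⟨m, hm⟩ := mem_iUnion.1 hzV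
      have h1 : z ∈ U (g (max n m)).1 := hUmono z hzf n _ (le_max_left n m) hn
      have h2 : z ∈ V (g (max n m)).1 := hVmono z hzf m _ (le_max_right n m) hm
      exact Set.disjoint_left.1 (ha (g (max n m)).1).2.2.2
        (subset_closure h1) (subset_closure h2)
    · rintro z ⟨hzf, hzB⟩
      have hzU : z ∈ U [] := hB0 hzB
      have hzT : z ∉ T := by
        intro h
        have h0 := mem_iInter.1 h 0
        obtain ⟨j, hj, hzj⟩ := mem_iUnion₂.1 h0
        have : j = [] := List.length_eq_zero_iff.1 hj
        rw [this] at hzj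
        exact hzj.2 (Or.inl hzU)
      exact ⟨mem_iUnion.2 ⟨0, by rw [hg0]; exact hzU⟩, hzf, hzT⟩
    · rintro z ⟨hzf, hzC⟩
      have hzV : z ∈ V [] := hC0 hzC
      have hzT : z ∉ T := by
        intro h
        have h0 := mem_iInter.1 h 0
        obtain ⟨j, hj, hzj⟩ := mem_iUnion₂.1 h0
        have : j = [] := List.length_eq_zero_iff.1 hj
        rw [this] at hzj
        exact hzj.2 (Or.inr hzV)
      exact ⟨mem_iUnion.2 ⟨0, by rw [hg0]; exact hzV⟩, hzf, hzT⟩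
end
end

section
/- Let f : X → Y be a continuous map between compact metrizable spaces with every fiber of covering dimension at most k, and assume X and Y are C-spaces. Let ε > 0, let U, V be open subsets of X with disjoint closures, and let F ⊆ Y be closed. Then there exist families {U_p}, {V_p} of open subsets of X and {F_p} of closed subsets of Y, p ∈ ℕ, such that: (1) the closures of U_p and V_p are disjoint; (2) U_p ⊇ U ∩ f⁻¹(F_p) and V_p ⊇ V ∩ f⁻¹(F_p); (3) F ⊆ ⋃_p F_p and diam F_p < ε; (4) E_p = f⁻¹(F_p) ∖ (U_p ∪ V_p) admits an open cover of order ≤ k and mesh ≤ ε; (5) the family {E_p : p ∈ ℕ} is discrete in X. -/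
open Set Topology

noncomputable section

/-! Let `g` be a Urysohn function for `closure U`, `closure V`. The closed pairs
`A n = {g ≤ 1/(n+2)}`, `B n = {g ≥ 1/(n+1)}` separate `closure U` from `closure V`, and their
gaps `(A n ∪ B n)ᶜ` are pairwise disjoint.

Fix `n` and `y`. The fibre `Z = f⁻¹(y)` has a finite cover by small open sets of order `≤ k + 1`;
take weights `w i ≥ 0` positive exactly on the pieces and signs `σ i = 1, -1, 0` according as the
piece meets `A n`, `B n` or neither. The level set `∑ σ w = (∑ w) / (2(k+1))` separates `A n`
from `B n` on `Z`, and near it no `k + 1` weights can all be close to `1/(k+1)` of the total: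
`∑ σ w` would then be close to a multiple of `(∑ w) / (k+1)`. The sets where one weight is
that large therefore cover the wall with order `≤ k`. This separation persists over a
neighbourhood of `Z`, hence over `f⁻¹(W)` for a small open `W ∋ y`.

Property C of `Y` refines the covers by such `W`, level by level, into disjoint families; by
compactness and shrinking we get finitely many closed `F_p`. Walls over the same level lie over
disjoint `F_p`, walls of different levels lie in disjoint gaps, so the finitely many closed walls
are pairwise disjoint, hence form a discrete family.
-/

open Metric

theorem Paper.OrderLE.image_of_subset {X : Type*} {c : Set (Set X)} {k : ℕ}
    (hc : Paper.OrderLE c k) {g : Set X → Set X} (hg : ∀ u, g u ⊆ u) :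
    Paper.OrderLE (g '' c) k := by
  intro x
  obtain ⟨hfin, hcard⟩ := hc x
  have hsub : {v ∈ g '' c | x ∈ v} ⊆ g '' {u ∈ c | x ∈ u} := by
    rintro _ ⟨⟨u, hu, rfl⟩, hx⟩
    exact ⟨u, ⟨hu, hg u hx⟩, rfl⟩
  exact ⟨(hfin.image g).subset hsub,
    (ncard_le_ncard hsub (hfin.image g)).trans ((ncard_image_le hfin).trans hcard)⟩

theorem Paper.orderLE_range_s5 {X ι : Type*} [Finite ι] {g : ι → Set X} {k : ℕ}
    (h : ∀ x, {i | x ∈ g i}.ncard ≤ k) : Paper.OrderLE (range g) k := by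
  intro x
  have himg : {u ∈ range g | x ∈ u} = g '' {i | x ∈ g i} := by
    ext u
    constructor
    · rintro ⟨⟨i, rfl⟩, hx⟩
      exact ⟨i, hx, rfl⟩
    · rintro ⟨i, hx, rfl⟩
      exact ⟨⟨i, rfl⟩, hx⟩
  rw [himg]
  exact ⟨toFinite _, (ncard_image_le (toFinite _)).trans (h x)⟩

theorem Paper.AdmitsSmallCover.mono {X : Type*} [MetricSpace X] {E E' : Set X} {k : ℕ} {ε : ℝ}
    (h : Paper.AdmitsSmallCover E k ε) (hE : E' ⊆ E) : Paper.AdmitsSmallCover E' k ε :=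
  let ⟨c, hco, hcov, hcd, hcord⟩ := h
  ⟨c, hco, hE.trans hcov, hcd, hcord⟩

theorem Paper.admitsSmallCover_empty {X : Type*} [MetricSpace X] (k : ℕ) (ε : ℝ) :
    Paper.AdmitsSmallCover (∅ : Set X) k ε :=
  ⟨∅, by simp, by simp, by simp, fun x => by simp⟩

theorem IsOpen.exists_continuous_nonneg_pos_iff {X : Type*} [TopologicalSpace X]
    [PerfectlyNormalSpace X] {O : Set X} (hO : IsOpen O) :
    ∃ g : X → ℝ, Continuous g ∧ (∀ x, 0 ≤ g x) ∧ ∀ x, 0 < g x ↔ x ∈ O := by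
  obtain ⟨g, hg, hg01⟩ :=
    perfectlyNormalSpace_iff_forall_isClosed_preimage_zero.1 ‹_› Oᶜ hO.isClosed_compl
  refine ⟨g, g.continuous, fun x => (hg01 x).1, fun x => ?_⟩
  rw [(hg01 x).1.lt_iff_ne', ← not_iff_not, not_not, ← mem_compl_iff, hg]
  rfl

theorem exists_isOpen_disjoint_closure {X : Type*} [TopologicalSpace X] [NormalSpace X]
    {K L : Set X} (hK : IsClosed K) (hL : IsClosed L) (h : Disjoint K L) :
    ∃ U V, IsOpen U ∧ IsOpen V ∧ K ⊆ U ∧ L ⊆ V ∧ Disjoint (closure U) (closure V) := by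
  obtain ⟨U, hU, hKU, hUL⟩ := normal_exists_closure_subset hK hL.isOpen_compl h.subset_compl_right
  obtain ⟨V, hV, hLV, hVU⟩ := normal_exists_closure_subset hL isClosed_closure.isOpen_compl
    (subset_compl_comm.1 hUL)
  exact ⟨U, V, hU, hV, hKU, hLV, disjoint_left.2 fun x hxU hxV => hVU hxV hxU⟩

open Finset in
theorem abs_sum_mul_sub_le {ι : Type*} [Fintype ι] {v : ι → ℝ} (hv : ∀ i, 0 ≤ v i)
    {σ : ι → ℤ} (hσ : ∀ i, |σ i| ≤ 1) {T : Finset ι} (hT : T.Nonempty) {γ : ℝ} (hγ : 0 ≤ γ)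
    (hlarge : ∀ i ∈ T, ((#T : ℝ)⁻¹ - γ) * ∑ j, v j < v i) :
    |∑ i, σ i * v i - (∑ i ∈ T, σ i) / #T * ∑ i, v i| ≤ 2 * #T * γ * ∑ i, v i := by
  classical
  set S := ∑ i, v i
  have hσabs (i : ι) : |(σ i : ℝ)| ≤ 1 := by exact_mod_cast hσ i
  have hsplit : ∑ i, σ i * v i - (∑ i ∈ T, σ i) / #T * S =
      ∑ i ∈ T, σ i * (v i - S / #T) + ∑ i ∈ Tᶜ, σ i * v i := by
    simp only [mul_sub, sum_sub_distrib, ← sum_add_sum_compl T (fun i => (σ i : ℝ) * v i)]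
    push_cast
    rw [sum_div, sum_mul, sub_add_eq_add_sub, add_sub_assoc, add_sub_assoc]
    congr 2
    exact sum_congr rfl fun i _ => by ring
  have hon (i : ι) (hi : i ∈ T) :
      |σ i * (v i - S / #T)| ≤ (v i - ((#T : ℝ)⁻¹ - γ) * S) + γ * S := by
    have h := hlarge i hi
    have hS : 0 ≤ S := sum_nonneg fun j _ => hv j
    rw [abs_mul]
    refine (mul_le_of_le_one_left (abs_nonneg _) (hσabs i)).trans ?_
    rw [abs_le, div_eq_inv_mul]
    constructor <;> nlinarith
  have hoff (i : ι) : |σ i * v i| ≤ v i := by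
    rw [abs_mul, abs_of_nonneg (hv i)]
    exact mul_le_of_le_one_left (hv i) (hσabs i)
  -- on `T`, `v i - S / #T` is the excess `v i - θ S` minus `γ S`, where `θ = 1 / #T - γ`;
  -- the excesses and the mass outside `T` add up to `#T γ S`
  calc |∑ i, σ i * v i - (∑ i ∈ T, σ i) / #T * S|
      ≤ ∑ i ∈ T, ((v i - ((#T : ℝ)⁻¹ - γ) * S) + γ * S) + ∑ i ∈ Tᶜ, v i := by
        rw [hsplit]
        refine (abs_add_le _ _).trans (add_le_add ?_ ?_)
        · exact (abs_sum_le_sum_abs _ _).trans (sum_le_sum hon)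
        · exact (abs_sum_le_sum_abs _ _).trans (sum_le_sum fun i _ => hoff i)
    _ = 2 * #T * γ * S := by
        have hS : ∑ i ∈ T, v i + ∑ i ∈ Tᶜ, v i = S := sum_add_sum_compl T v
        simp only [sum_add_distrib, sum_sub_distrib, sum_const, nsmul_eq_mul]
        field_simp
        linarith

open Finset in
theorem le_abs_sum_mul_sub_half {ι : Type*} [Fintype ι] {v : ι → ℝ} (hv : ∀ i, 0 ≤ v i)
    {σ : ι → ℤ} (hσ : ∀ i, |σ i| ≤ 1) {T : Finset ι} (hT : T.Nonempty)
    (hlarge : ∀ i ∈ T, ((#T : ℝ)⁻¹ - (8 * (#T : ℝ) ^ 2)⁻¹) * ∑ j, v j < v i) :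
    (∑ i, v i) / (4 * #T) ≤ |∑ i, σ i * v i - (∑ i, v i) / (2 * #T)| := by
  classical
  set S := ∑ i, v i
  set m := ∑ i ∈ T, σ i
  have hn : (0 : ℝ) < #T := by exact_mod_cast hT.card_pos
  have hS : 0 ≤ S := sum_nonneg fun j _ => hv j
  have hγ : 2 * (#T : ℝ) * (8 * (#T : ℝ) ^ 2)⁻¹ * S = S / (4 * #T) := by field_simp; ring
  have hnear : |∑ i, σ i * v i - (m : ℝ) / #T * S| ≤ S / (4 * #T) :=
    (abs_sum_mul_sub_le hv hσ hT (by positivity) hlarge).trans_eq hγ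
  have hodd : (1 : ℝ) ≤ |2 * (m : ℝ) - 1| := by
    have : (1 : ℤ) ≤ |2 * m - 1| := by rcases abs_cases (2 * m - 1) with ⟨h, _⟩ | ⟨h, _⟩ <;> omega
    exact_mod_cast this
  have hfar : S / (2 * #T) ≤ |(m : ℝ) / #T * S - S / (2 * #T)| := by
    rw [show (m : ℝ) / #T * S - S / (2 * #T) = (2 * m - 1) * (S / (2 * #T)) by
      field_simp, abs_mul, abs_of_nonneg (by positivity : 0 ≤ S / (2 * #T))]
    exact le_mul_of_one_le_left (by positivity) hodd
  calc S / (4 * #T) = S / (2 * #T) - S / (4 * #T) := by field_simp; ring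
    _ ≤ |(m : ℝ) / #T * S - S / (2 * #T)| - |∑ i, σ i * v i - (m : ℝ) / #T * S| :=
        sub_le_sub hfar hnear
    _ ≤ |∑ i, σ i * v i - S / (2 * #T)| := by
        rw [abs_sub_comm (∑ i, σ i * v i)]
        exact (abs_sub_abs_le_abs_sub _ _).trans_eq (congrArg abs (by ring))

section StarCover

variable {X ι : Type*} [Fintype ι]

/-- With `S = ∑ w`, the points near the level `∑ σ w = S / (2n)` where the `i`-th weight is
nearly `S / n`. -/
def starSet (w : ι → X → ℝ) (σ : ι → ℤ) (n : ℕ) (i : ι) : Set X :=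
  {x | ((n : ℝ)⁻¹ - (8 * (n : ℝ) ^ 2)⁻¹) * ∑ j, w j x < w i x ∧
    |∑ j, σ j * w j x - (∑ j, w j x) / (2 * n)| < (∑ j, w j x) / (4 * n)}

theorem ncard_setOf_mem_starSet_le {w : ι → X → ℝ} (hw : ∀ i x, 0 ≤ w i x) {σ : ι → ℤ}
    (hσ : ∀ i, |σ i| ≤ 1) (k : ℕ) (x : X) : {i | x ∈ starSet w σ (k + 1) i}.ncard ≤ k := by
  classical
  by_contra! hk
  rw [ncard_eq_toFinset_card'] at hk
  obtain ⟨T, hTsub, hT⟩ := Finset.exists_subset_card_eq hk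
  have hTne : T.Nonempty := Finset.card_pos.1 (by omega)
  have hmem (i : ι) (hi : i ∈ T) : x ∈ starSet w σ (k + 1) i := by simpa using hTsub hi
  obtain ⟨i, hi⟩ := hTne
  have hfar := le_abs_sum_mul_sub_half (v := fun j => w j x) (hw · x) hσ ⟨i, hi⟩
    (by rw [hT]; exact fun j hj => (hmem j hj).1)
  rw [hT] at hfar
  exact (hmem i hi).2.not_ge hfar

theorem exists_mem_starSet {w : ι → X → ℝ} (hw : ∀ i x, 0 ≤ w i x) (σ : ι → ℤ) {n : ℕ}
    (hn : 0 < n) {x : X} (hS : 0 < ∑ j, w j x) (hcard : {i | 0 < w i x}.ncard ≤ n)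
    (hband : |∑ j, σ j * w j x - (∑ j, w j x) / (2 * n)| < (∑ j, w j x) / (4 * n)) :
    ∃ i, x ∈ starSet w σ n i := by
  classical
  have hn' : (0 : ℝ) < n := by exact_mod_cast hn
  set P := Finset.univ.filter fun i => 0 < w i x
  have hPS : ∑ i ∈ P, w i x = ∑ j, w j x :=
    Finset.sum_filter_of_ne fun i _ h => (hw i x).lt_of_ne' h
  have hPcard : (P.card : ℝ) ≤ n := by
    rw [← ncard_coe_finset, Finset.coe_filter] at *
    exact_mod_cast (by simpa using hcard)
  have hPne : P.Nonempty := by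
    by_contra h
    rw [Finset.not_nonempty_iff_eq_empty.1 h, Finset.sum_empty] at hPS
    linarith
  obtain ⟨i, -, hi⟩ := Finset.exists_le_of_sum_le hPne (f := fun _ => (∑ j, w j x) / n)
    (g := fun i => w i x) (by
      rw [hPS, Finset.sum_const, nsmul_eq_mul, mul_div_assoc', div_le_iff₀ hn']
      exact mul_le_mul_of_nonneg_right hPcard hS.le |>.trans_eq (mul_comm _ _))
  refine ⟨i, lt_of_lt_of_le ?_ hi, hband⟩
  rw [sub_mul, div_eq_inv_mul]
  exact sub_lt_self _ (by positivity)

theorem isOpen_starSet [TopologicalSpace X] {w : ι → X → ℝ} (hw : ∀ i, Continuous (w i))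
    (σ : ι → ℤ) (n : ℕ) (i : ι) : IsOpen (starSet w σ n i) := by
  have hS : Continuous fun x => ∑ j, w j x := continuous_finsetSum _ fun j _ => hw j
  have hD : Continuous fun x => ∑ j, σ j * w j x :=
    continuous_finsetSum _ fun j _ => continuous_const.mul (hw j)
  exact (isOpen_lt (continuous_const.mul hS) (hw i)).inter
    (isOpen_lt ((hD.sub (hS.div_const _)).abs) (hS.div_const _))

theorem starSet_subset {w : ι → X → ℝ} (hw : ∀ i x, 0 ≤ w i x) (σ : ι → ℤ) (n : ℕ) (i : ι) :
    starSet w σ n i ⊆ {x | 0 < w i x} := by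
  intro x hx
  have hcoef : (0 : ℝ) ≤ (n : ℝ)⁻¹ - (8 * (n : ℝ) ^ 2)⁻¹ := by
    rcases n.eq_zero_or_pos with rfl | hn
    · simp
    · have hn' : (1 : ℝ) ≤ n := by exact_mod_cast hn
      rw [sub_nonneg]
      exact inv_anti₀ (by positivity) (by nlinarith)
  exact lt_of_le_of_lt (mul_nonneg hcoef (Finset.sum_nonneg fun j _ => hw j x)) hx.1

end StarCover

universe u

theorem Paper.DimLE.exists_finite_cover {X : Type u} [MetricSpace X] {Z : Set X}
    (hZ : IsCompact Z) {k : ℕ} (hdim : Paper.DimLE Z k) {δ : ℝ} (hδ : 0 < δ) :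
    ∃ (ι : Type u) (_ : Fintype ι) (O : ι → Set X), (∀ i, IsOpen (O i)) ∧
      (∀ i, diam (O i) ≤ δ) ∧ Z ⊆ ⋃ i, O i ∧ ∀ x ∈ Z, {i | x ∈ O i}.ncard ≤ k + 1 := by
  have := isCompact_iff_compactSpace.1 hZ
  obtain ⟨d, hdo, hdcov, hdref, hdord⟩ := hdim (range fun z : Z => ball z (δ / 2))
    (by rintro _ ⟨z, rfl⟩; exact isOpen_ball)
    (eq_univ_of_forall fun z => ⟨_, ⟨z, rfl⟩, mem_ball_self (half_pos hδ)⟩)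
  rw [show ((k : ℤ) + 1).toNat = k + 1 by omega] at hdord
  obtain ⟨t, ht⟩ := isCompact_univ.elim_finite_subcover (fun u : d => (u : Set Z))
    (fun u => hdo u u.2) (by rw [← sUnion_eq_iUnion, hdcov])
  have hrep (u : d) : ∃ O : Set X, IsOpen O ∧ diam O ≤ δ ∧
      ∀ x (hx : x ∈ Z), x ∈ O ↔ (⟨x, hx⟩ : Z) ∈ (u : Set Z) := by
    obtain ⟨_, ⟨z, rfl⟩, huz⟩ := hdref u u.2
    obtain ⟨O, hO, hOu⟩ := isOpen_induced_iff.1 (hdo u u.2)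
    refine ⟨O ∩ ball (z : X) (δ / 2), hO.inter isOpen_ball,
      (diam_mono inter_subset_right isBounded_ball).trans
        ((diam_ball (half_pos hδ).le).trans_eq (by ring)), fun x hx => ?_⟩
    rw [← hOu]
    exact ⟨fun h => h.1, fun h => ⟨h, huz (hOu ▸ h)⟩⟩
  choose O hOo hOd hOmem using hrep
  refine ⟨t, inferInstance, fun u => O u, fun u => hOo u, fun u => hOd u, fun x hx => ?_,
    fun x hx => ?_⟩
  · obtain ⟨u, hut, hxu⟩ := mem_iUnion₂.1 (ht (mem_univ ⟨x, hx⟩))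
    exact mem_iUnion.2 ⟨⟨u, hut⟩, (hOmem u x hx).2 hxu⟩
  · obtain ⟨hfin, hcard⟩ := hdord ⟨x, hx⟩
    have hinj : Function.Injective fun u : t => ((u : d) : Set Z) :=
      Subtype.val_injective.comp Subtype.val_injective
    calc {u : t | x ∈ O u}.ncard
        = ((fun u : t => ((u : d) : Set Z)) '' {u | x ∈ O u}).ncard :=
          (ncard_image_of_injective _ hinj).symm
      _ ≤ {v ∈ d | (⟨x, hx⟩ : Z) ∈ v}.ncard :=
          ncard_le_ncard (by rintro _ ⟨u, hu, rfl⟩; exact ⟨(u : d).2, (hOmem u x hx).1 hu⟩)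
            hfin
      _ ≤ k + 1 := hcard

section Separation

variable {X : Type*} [MetricSpace X] {k : ℕ} {ε : ℝ} {A B : Set X}

structure SeparatesOver (k : ℕ) (ε : ℝ) (A B G U V : Set X) : Prop where
  isOpen_left : IsOpen U
  isOpen_right : IsOpen V
  disjoint_closure : Disjoint (closure U) (closure V)
  inter_subset_left : A ∩ G ⊆ U
  inter_subset_right : B ∩ G ⊆ V
  admitsSmallCover : Paper.AdmitsSmallCover (G \ (U ∪ V)) k ε

theorem SeparatesOver.mono {G G' U V : Set X} (h : SeparatesOver k ε A B G U V)
    (hG : G' ⊆ G) : SeparatesOver k ε A B G' U V :=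
  let ⟨hU, hV, hUV, hAU, hBV, hcov⟩ := h
  ⟨hU, hV, hUV, (inter_subset_inter_right A hG).trans hAU,
    (inter_subset_inter_right B hG).trans hBV, hcov.mono (sdiff_subset_sdiff_left hG)⟩

theorem separatesOver_empty : SeparatesOver k ε A B ∅ ∅ ∅ :=
  ⟨isOpen_empty, isOpen_empty, by simp, by simp, by simp,
    by simpa using Paper.admitsSmallCover_empty k ε⟩

theorem exists_separatesOver_of_weights [CompactSpace X] {ι : Type*} [Fintype ι]
    {w : ι → X → ℝ} (hw : ∀ i, Continuous (w i)) (hw0 : ∀ i x, 0 ≤ w i x)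
    {σ : ι → ℤ} (hσ : ∀ i, |σ i| ≤ 1) {Z : Set X} (hZ : IsClosed Z)
    (hpos : ∀ x ∈ Z, 0 < ∑ i, w i x) (hcard : ∀ x ∈ Z, {i | 0 < w i x}.ncard ≤ k + 1)
    (hA : ∀ x ∈ A ∩ Z, ∑ i, σ i * w i x = ∑ i, w i x)
    (hB : ∀ x ∈ B ∩ Z, ∑ i, σ i * w i x = -∑ i, w i x)
    (hdiam : ∀ i, diam {x | 0 < w i x} ≤ ε) :
    ∃ U V, SeparatesOver k ε A B Z U V := by
  set n : ℝ := ((k + 1 : ℕ) : ℝ)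
  have hn : 1 ≤ n := by simp [n]
  set S : X → ℝ := fun x => ∑ i, w i x
  set D : X → ℝ := fun x => ∑ i, σ i * w i x
  -- the two sides, within `Z`, of the band of `exists_mem_starSet`
  set KU := Z ∩ {x | S x / (4 * n) ≤ D x - S x / (2 * n)}
  set KV := Z ∩ {x | D x - S x / (2 * n) ≤ -(S x / (4 * n))}
  have hsmall (x : X) : 0 ≤ S x → S x / (4 * n) ≤ S x / 4 ∧ S x / (2 * n) ≤ S x / 2 :=
    fun h => ⟨div_le_div_of_nonneg_left h (by positivity) (by linarith),
      div_le_div_of_nonneg_left h (by positivity) (by linarith)⟩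
  have hKUKV : Disjoint KU KV := by
    refine disjoint_left.2 fun x ⟨hxZ, hxU⟩ ⟨_, hxV⟩ => ?_
    have : 0 < S x / (4 * n) := div_pos (hpos x hxZ) (by positivity)
    simp only [mem_ofPred_eq] at hxU hxV
    linarith
  obtain ⟨U, V, hU, hV, hKU, hKV, hUV⟩ := exists_isOpen_disjoint_closure
    (hZ.inter (isClosed_le (by fun_prop) (by fun_prop)))
    (hZ.inter (isClosed_le (by fun_prop) (by fun_prop))) hKUKV
  refine ⟨U, V, hU, hV, hUV, fun x hx => hKU ⟨hx.2, ?_⟩, fun x hx => hKV ⟨hx.2, ?_⟩,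
    range (starSet w σ (k + 1)), ?_, fun x ⟨hxZ, hxUV⟩ => ?_, ?_,
    Paper.orderLE_range_s5 (ncard_setOf_mem_starSet_le hw0 hσ k)⟩
  · have h := hsmall x (hpos x hx.2).le
    simp only [mem_ofPred_eq, S, D, hA x hx] at h ⊢
    linarith [hpos x hx.2]
  · have h := hsmall x (hpos x hx.2).le
    have h2 : 0 ≤ S x / (2 * n) := div_nonneg (hpos x hx.2).le (by positivity)
    simp only [mem_ofPred_eq, S, D, hB x hx] at h h2 ⊢
    linarith [hpos x hx.2]
  · rintro _ ⟨i, rfl⟩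
    exact isOpen_starSet hw σ _ i
  · have hxU : x ∉ KU := fun h => hxUV (Or.inl (hKU h))
    have hxV : x ∉ KV := fun h => hxUV (Or.inr (hKV h))
    simp only [KU, KV, mem_inter_iff, mem_ofPred_eq, not_and, not_le] at hxU hxV
    obtain ⟨i, hi⟩ := exists_mem_starSet hw0 σ k.succ_pos (hpos x hxZ) (hcard x hxZ)
      (abs_lt.2 ⟨by linarith [hxV hxZ], hxU hxZ⟩)
    exact ⟨_, ⟨i, rfl⟩, hi⟩
  · rintro _ ⟨i, rfl⟩
    exact (diam_mono (starSet_subset hw0 σ _ i) isBounded_of_compactSpace).trans (hdiam i)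

theorem exists_separatesOver_of_dimLE [CompactSpace X] {Z : Set X} (hZ : IsClosed Z)
    (hdim : Paper.DimLE Z k) (hA : IsClosed A) (hB : IsClosed B) (hAB : Disjoint A B) (hε : 0 < ε) :
    ∃ U V, SeparatesOver k ε A B Z U V := by
  classical
  obtain ⟨r, hr, hdisj⟩ := (hAB.mono inter_subset_left inter_subset_left).exists_thickenings
    (hA.inter hZ).isCompact (hB.inter hZ)
  obtain ⟨ι, _, O, hOo, hOd, hZO, hOord⟩ :=
    hdim.exists_finite_cover hZ.isCompact (lt_min hε (half_pos hr))
  have hsmall (i : ι) (hiA : (O i ∩ (A ∩ Z)).Nonempty) : ¬ (O i ∩ (B ∩ Z)).Nonempty := by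
    rintro ⟨b, hbO, hb⟩
    obtain ⟨a, haO, ha⟩ := hiA
    have hba : dist b a < r := (dist_le_diam_of_mem isBounded_of_compactSpace hbO haO).trans_lt
      ((hOd i).trans_lt ((min_le_right _ _).trans_lt (half_lt_self hr)))
    exact hdisj.le_bot ⟨mem_thickening_iff.2 ⟨a, ha, hba⟩, self_subset_thickening hr _ hb⟩
  choose w hw hw0 hwO using fun i => (hOo i).exists_continuous_nonneg_pos_iff
  let σ : ι → ℤ := fun i =>
    if (O i ∩ (A ∩ Z)).Nonempty then 1 else if (O i ∩ (B ∩ Z)).Nonempty then -1 else 0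
  have hσw (x : X) (i : ι) (c : ℤ) (hc : x ∈ O i → σ i = c) : σ i * w i x = c * w i x := by
    by_cases hx : x ∈ O i
    · rw [hc hx]
    · rw [← (hw0 i x).antisymm (not_lt.1 (mt (hwO i x).1 hx)), mul_zero, mul_zero]
  refine exists_separatesOver_of_weights hw hw0 (σ := σ) (fun i => ?_) hZ (fun x hx => ?_)
    (fun x hx => ?_) (fun x hx => ?_) (fun x hx => ?_) (fun i => ?_)
  · simp only [σ]
    split_ifs <;> norm_num
  · obtain ⟨i, hi⟩ := mem_iUnion.1 (hZO hx)
    exact Finset.sum_pos' (fun j _ => hw0 j x) ⟨i, Finset.mem_univ _, (hwO i x).2 hi⟩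
  · simpa only [hwO] using hOord x hx
  · refine Finset.sum_congr rfl fun i _ => (hσw x i 1 fun hxO => ?_).trans (by simp)
    exact if_pos ⟨x, hxO, hx⟩
  · rw [← Finset.sum_neg_distrib]
    refine Finset.sum_congr rfl fun i _ => (hσw x i (-1) fun hxO => ?_).trans (by simp)
    have hxB : (O i ∩ (B ∩ Z)).Nonempty := ⟨x, hxO, hx⟩
    simp only [σ, if_neg (mt (hsmall i) (not_not.2 hxB)), if_pos hxB]
  · simpa only [hwO, ofPred_mem_eq] using (hOd i).trans (min_le_left _ _)

theorem SeparatesOver.exists_isOpen_superset [CompactSpace X] {Z U V : Set X}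
    (hA : IsClosed A) (hB : IsClosed B) (h : SeparatesOver k ε A B Z U V) :
    ∃ G, IsOpen G ∧ Z ⊆ G ∧ ∃ U' V', SeparatesOver k ε A B G U' V' := by
  obtain ⟨hU, hV, hUV, hAU, hBV, c, hco, hcov, hcd, hcord⟩ := h
  set c' := (fun u => u \ (A ∪ B)) '' c
  have hc'AB : Disjoint (⋃₀ c') (A ∪ B) := by
    rw [disjoint_sUnion_left]
    rintro _ ⟨u, -, rfl⟩
    exact disjoint_sdiff_left
  refine ⟨U \ B ∪ V \ A ∪ ⋃₀ c', ?_, fun x hxZ => ?_, U \ B, V \ A, hU.sdiff hB, hV.sdiff hA,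
    hUV.mono (closure_mono sdiff_subset) (closure_mono sdiff_subset), ?_, ?_, c', ?_,
    fun x hx => ?_, ?_, hcord.image_of_subset fun u => sdiff_subset⟩
  · refine ((hU.sdiff hB).union (hV.sdiff hA)).union (isOpen_sUnion ?_)
    rintro _ ⟨u, hu, rfl⟩
    exact (hco u hu).sdiff (hA.union hB)
  · have hAB' : x ∉ A ∩ Z ∨ x ∉ B ∩ Z := by
      by_contra! h
      exact hUV.le_bot ⟨subset_closure (hAU h.1), subset_closure (hBV h.2)⟩
    by_cases hxA : x ∈ A
    · exact Or.inl (Or.inl ⟨hAU ⟨hxA, hxZ⟩, fun hxB => hAB'.elim (· ⟨hxA, hxZ⟩) (· ⟨hxB, hxZ⟩)⟩)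
    by_cases hxB : x ∈ B
    · exact Or.inl (Or.inr ⟨hBV ⟨hxB, hxZ⟩, hxA⟩)
    by_cases hxUV : x ∈ U ∪ V
    · exact Or.inl (hxUV.imp (⟨·, hxB⟩) (⟨·, hxA⟩))
    obtain ⟨u, hu, hxu⟩ := hcov ⟨hxZ, hxUV⟩
    exact Or.inr ⟨u \ (A ∪ B), ⟨u, hu, rfl⟩, hxu, fun h => h.elim hxA hxB⟩
  · rintro x ⟨hxA, (hx | hx) | hx⟩
    exacts [hx, absurd hxA hx.2, absurd (Or.inl hxA) (disjoint_left.1 hc'AB hx)]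
  · rintro x ⟨hxB, (hx | hx) | hx⟩
    exacts [absurd hxB hx.2, hx, absurd (Or.inr hxB) (disjoint_left.1 hc'AB hx)]
  · rintro _ ⟨u, hu, rfl⟩
    exact (hco u hu).sdiff (hA.union hB)
  · exact hx.1.resolve_left hx.2
  · rintro _ ⟨u, hu, rfl⟩
    exact (diam_mono sdiff_subset isBounded_of_compactSpace).trans (hcd u hu)

end Separation

theorem exists_nhds_separatesOver_preimage {X Y : Type*} [MetricSpace X] [CompactSpace X]
    [MetricSpace Y] {f : X → Y} (hf : Continuous f) {k : ℕ} {y : Y}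
    (hdim : Paper.DimLE (f ⁻¹' {y}) k) {A B : Set X} (hA : IsClosed A) (hB : IsClosed B)
    (hAB : Disjoint A B) {ε : ℝ} (hε : 0 < ε) :
    ∃ W, IsOpen W ∧ y ∈ W ∧ diam W < ε ∧ ∃ U V, SeparatesOver k ε A B (f ⁻¹' W) U V := by
  obtain ⟨U₀, V₀, h₀⟩ :=
    exists_separatesOver_of_dimLE (isClosed_singleton.preimage hf) hdim hA hB hAB hε
  obtain ⟨G, hGo, hyG, U, V, hG⟩ := h₀.exists_isOpen_superset hA hB
  have hK : IsClosed (f '' Gᶜ) := (hGo.isClosed_compl.isCompact.image hf).isClosed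
  refine ⟨ball y (ε / 3) \ f '' Gᶜ, isOpen_ball.sdiff hK,
    ⟨mem_ball_self (by positivity), fun ⟨x, hx, hxy⟩ => hx (hyG hxy)⟩, ?_, U, V, hG.mono ?_⟩
  · calc diam (ball y (ε / 3) \ f '' Gᶜ) ≤ 2 * (ε / 3) :=
          (diam_mono sdiff_subset isBounded_ball).trans (diam_ball (by positivity))
      _ < ε := by linarith
  · exact fun x hx => by_contra fun hxG => hx.2 ⟨x, hxG, rfl⟩

theorem exists_closed_separations_with_disjoint_gaps {X : Type*} [TopologicalSpace X]
    [NormalSpace X] {P Q : Set X} (hP : IsClosed P) (hQ : IsClosed Q) (hPQ : Disjoint P Q) :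
    ∃ A B : ℕ → Set X, (∀ n, IsClosed (A n) ∧ IsClosed (B n) ∧ Disjoint (A n) (B n) ∧
      P ⊆ A n ∧ Q ⊆ B n) ∧ Pairwise fun n m => Disjoint (A n ∪ B n)ᶜ (A m ∪ B m)ᶜ := by
  obtain ⟨g, hgP, hgQ, hg⟩ := exists_continuous_zero_one_of_isClosed hP hQ hPQ
  -- the gaps are the preimages of the disjoint intervals `(1 / (n + 2), 1 / (n + 1))`
  refine ⟨fun n => {x | g x ≤ 1 / (n + 2)}, fun n => {x | 1 / (n + 1) ≤ g x},
    fun n => ⟨isClosed_le g.continuous continuous_const,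
      isClosed_le continuous_const g.continuous, ?_, fun x hx => ?_, fun x hx => ?_⟩, ?_⟩
  · refine disjoint_left.2 fun x hA hB => ?_
    have : (1 : ℝ) / (n + 2) < 1 / (n + 1) := one_div_lt_one_div_of_lt (by positivity) (by linarith)
    simp only [mem_ofPred_eq] at hA hB
    linarith
  · simp only [mem_ofPred_eq, hgP hx]
    positivity
  · simp only [mem_ofPred_eq, hgQ hx]
    exact div_le_one_of_le₀ (by linarith [n.cast_nonneg (α := ℝ)]) (by positivity)
  · intro n m hnm
    wlog h : n < m generalizing n m
    · exact (this hnm.symm ((Ne.symm hnm).lt_of_le (not_lt.1 h))).symm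
    refine disjoint_left.2 fun x hn hm => ?_
    simp only [compl_union, mem_inter_iff, mem_compl_iff, mem_ofPred_eq,
      not_le] at hn hm
    have : (1 : ℝ) / (m + 1) ≤ 1 / (n + 2) := one_div_le_one_div_of_le (by positivity) (by
      have : (n : ℝ) + 1 ≤ m := by exact_mod_cast h
      linarith)
    linarith [hn.1, hm.2]

theorem Paper.CSpace.exists_finite_closed_refinement {Y : Type*} [TopologicalSpace Y]
    [CompactSpace Y] [NormalSpace Y] (hC : Paper.CSpace Y) (α : ℕ → Set (Set Y))
    (hα : ∀ n, (∀ u ∈ α n, IsOpen u) ∧ ⋃₀ α n = univ) :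
    ∃ (F : ℕ → Set Y) (lev : ℕ → ℕ), (∀ p, IsClosed (F p)) ∧
      (∀ p, (F p).Nonempty → ∃ v ∈ α (lev p), F p ⊆ v) ∧ ⋃ p, F p = univ ∧
      {p | (F p).Nonempty}.Finite ∧ ∀ p q, p ≠ q → lev p = lev q → Disjoint (F p) (F q) := by
  obtain ⟨μ, hμ, hμcov⟩ := hC α hα
  -- members of `⋃ n, μ n` are tagged with their level: distinct members of a level are disjoint
  obtain ⟨b, hb, hbfin, hbcov⟩ := isCompact_univ.elim_finite_subcover_image
    (b := {q : ℕ × Set Y | q.2 ∈ μ q.1}) (c := Prod.snd) (fun q hq => (hμ q.1).1 _ hq)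
    (fun y _ => by
      obtain ⟨_, ⟨_, ⟨n, rfl⟩, hu⟩, hyu⟩ := hμcov ▸ mem_univ y
      exact mem_iUnion₂.2 ⟨(n, _), hu, hyu⟩)
  have := hbfin.to_subtype
  obtain ⟨v, hvcov, -, hvsub⟩ := exists_iUnion_eq_closure_subset (u := fun q : b => q.1.2)
    (fun q => (hμ q.1.1).1 _ (hb q.2)) (fun _ => toFinite _)
    (eq_univ_of_forall fun y => by simpa using hbcov (mem_univ y))
  obtain ⟨e, he⟩ := exists_injective_nat b
  set F := Function.extend e (fun q => closure (v q)) fun _ => ∅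
  set lev := Function.extend e (fun q : b => q.1.1) fun _ => 0
  have hF (p : ℕ) : (∃ q, e q = p ∧ F p = closure (v q) ∧ lev p = q.1.1) ∨ F p = ∅ := by
    by_cases hp : ∃ q, e q = p
    · obtain ⟨q, rfl⟩ := hp
      exact Or.inl ⟨q, rfl, he.extend_apply _ _ _, he.extend_apply _ _ _⟩
    · exact Or.inr (Function.extend_apply' _ _ _ hp)
  refine ⟨F, lev, fun p => ?_, fun p hp => ?_, ?_, ?_, fun p p' hpp' hlev => ?_⟩
  · rcases hF p with ⟨q, -, hFq, -⟩ | hFp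
    · exact hFq ▸ isClosed_closure
    · exact hFp ▸ isClosed_empty
  · rcases hF p with ⟨q, -, hFq, hlq⟩ | hFp
    · obtain ⟨u, hu, hqu⟩ := (hμ q.1.1).2.2 _ (hb q.2)
      exact ⟨u, hlq ▸ hu, hFq ▸ (hvsub q).trans hqu⟩
    · exact absurd hFp hp.ne_empty
  · refine eq_univ_of_forall fun y => ?_
    obtain ⟨q, hyq⟩ := mem_iUnion.1 (hvcov ▸ mem_univ y)
    have hFq : F (e q) = closure (v q) := he.extend_apply _ _ q
    exact mem_iUnion.2 ⟨e q, hFq ▸ subset_closure hyq⟩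
  · refine (finite_range e).subset fun p hp => ?_
    rcases hF p with ⟨q, hq, -⟩ | hFp
    · exact ⟨q, hq⟩
    · exact absurd hFp hp.ne_empty
  · rcases hF p with ⟨q, rfl, hFq, hlq⟩ | hFp
    · rcases hF p' with ⟨q', rfl, hFq', hlq'⟩ | hFp'
      · have hqq' : q.1.2 ≠ q'.1.2 := fun h =>
          hpp' (congrArg e (Subtype.ext (Prod.ext (hlq.symm.trans (hlev.trans hlq')) h)))
        rw [hFq, hFq']
        refine ((hμ q.1.1).2.1 (hb q.2) ?_ hqq').mono (hvsub q) (hvsub q')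
        exact (hlq.symm.trans (hlev.trans hlq')) ▸ hb q'.2
      · exact hFp' ▸ disjoint_empty _
    · exact hFp ▸ empty_disjoint _

theorem Paper.discreteFamily_of_pairwiseDisjoint {X : Type*} [TopologicalSpace X]
    {E : ℕ → Set X} (hE : ∀ p, IsClosed (E p)) (hdisj : Pairwise fun p q => Disjoint (E p) (E q))
    (hfin : {p | (E p).Nonempty}.Finite) : Paper.DiscreteFamily E := by
  intro x
  have hlf : LocallyFinite E := fun _ =>
    ⟨univ, Filter.univ_mem, hfin.subset fun p ⟨y, hy, _⟩ => ⟨y, hy⟩⟩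
  refine ⟨_, hlf.iInter_compl_mem_nhds hE x, fun p ⟨y, hyW, hyp⟩ q ⟨z, hzW, hzq⟩ => ?_⟩
  have hmem {r : ℕ} {z : X} (hzW : z ∈ ⋂ i, ⋂ (_ : x ∉ E i), (E i)ᶜ) (hz : z ∈ E r) : x ∈ E r :=
    by_contra fun h => mem_iInter₂.1 hzW r h hz
  by_contra hpq
  exact disjoint_left.1 (hdisj hpq) (hmem hyW hyp) (hmem hzW hzq)

theorem exists_separatesOver_closed_cover {X Y : Type*} [MetricSpace X] [CompactSpace X]
    [MetricSpace Y] [CompactSpace Y] {f : X → Y} (hf : Continuous f) {k : ℕ}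
    (hdim : ∀ y : Y, Paper.DimLE (f ⁻¹' {y}) k) (hCY : Paper.CSpace Y) {A B : ℕ → Set X}
    (hAB : ∀ n, IsClosed (A n) ∧ IsClosed (B n) ∧ Disjoint (A n) (B n)) {ε : ℝ} (hε : 0 < ε) :
    ∃ (F : ℕ → Set Y) (lev : ℕ → ℕ) (U V : ℕ → Set X),
      (∀ p, IsClosed (F p) ∧ diam (F p) < ε ∧
        SeparatesOver k ε (A (lev p)) (B (lev p)) (f ⁻¹' F p) (U p) (V p)) ∧
      ⋃ p, F p = univ ∧ {p | (F p).Nonempty}.Finite ∧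
      ∀ p q, p ≠ q → lev p = lev q → Disjoint (F p) (F q) := by
  obtain ⟨F, lev, hFcl, hFα, hFcov, hFfin, hFdisj⟩ := hCY.exists_finite_closed_refinement
    (fun n => {W | IsOpen W ∧ diam W < ε ∧ ∃ U V, SeparatesOver k ε (A n) (B n) (f ⁻¹' W) U V})
    fun n => ⟨fun W hW => hW.1, eq_univ_of_forall fun y => by
      obtain ⟨W, hWo, hyW, hW⟩ := exists_nhds_separatesOver_preimage hf (hdim y) (hAB n).1
        (hAB n).2.1 (hAB n).2.2 hε
      exact ⟨W, ⟨hWo, hW⟩, hyW⟩⟩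
  have hgood (p : ℕ) : diam (F p) < ε ∧
      ∃ U V, SeparatesOver k ε (A (lev p)) (B (lev p)) (f ⁻¹' F p) U V := by
    rcases (F p).eq_empty_or_nonempty with h | h
    · rw [h, diam_empty, preimage_empty]
      exact ⟨hε, ∅, ∅, separatesOver_empty⟩
    · obtain ⟨W, ⟨-, hWd, U, V, hsep⟩, hFW⟩ := hFα p h
      exact ⟨(diam_mono hFW isBounded_of_compactSpace).trans_lt hWd, U, V,
        hsep.mono (preimage_mono hFW)⟩
  choose hdiam U V hsep using hgood
  exact ⟨F, lev, U, V, fun p => ⟨hFcl p, hdiam p, hsep p⟩, hFcov, hFfin, hFdisj⟩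

theorem stmt5_general {X Y : Type*} [MetricSpace X] [CompactSpace X] [MetricSpace Y] [CompactSpace Y]
    (f : X → Y) (hf : Continuous f) (k : ℕ)
    (hdim : ∀ y : Y, Paper.DimLE (f ⁻¹' {y}) (k : ℤ))
    (hCY : Paper.CSpace Y)
    (ε : ℝ) (hε : 0 < ε)
    (U V : Set X)
    (hUV : Disjoint (closure U) (closure V))
    (F : Set Y) :
    ∃ (U' V' : ℕ → Set X) (F' : ℕ → Set Y),
      (∀ p, IsClosed (F' p) ∧ IsOpen (U' p) ∧ IsOpen (V' p) ∧
        Disjoint (closure (U' p)) (closure (V' p))) ∧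
      (∀ p, U ∩ f ⁻¹' F' p ⊆ U' p ∧ V ∩ f ⁻¹' F' p ⊆ V' p) ∧
      (F ⊆ ⋃ p : ℕ, F' p) ∧ (∀ p, Metric.diam (F' p) < ε) ∧
      (∀ p, Paper.AdmitsSmallCover (f ⁻¹' F' p \ (U' p ∪ V' p)) k ε) ∧
      Paper.DiscreteFamily (fun p : ℕ => f ⁻¹' F' p \ (U' p ∪ V' p)) := by
  obtain ⟨A, B, hAB, hgap⟩ :=
    exists_closed_separations_with_disjoint_gaps isClosed_closure isClosed_closure hUV
  obtain ⟨F', lev, U', V', hgood, hF'cov, hF'fin, hF'disj⟩ := exists_separatesOver_closed_cover hf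
    hdim hCY (fun n => ⟨(hAB n).1, (hAB n).2.1, (hAB n).2.2.1⟩) hε
  have hsep (p : ℕ) := (hgood p).2.2
  have hwall (p : ℕ) : f ⁻¹' F' p \ (U' p ∪ V' p) ⊆ (A (lev p) ∪ B (lev p))ᶜ :=
    fun x ⟨hxF, hxUV⟩ hxAB => hxUV <| hxAB.imp
      (fun hxA => (hsep p).inter_subset_left ⟨hxA, hxF⟩)
      (fun hxB => (hsep p).inter_subset_right ⟨hxB, hxF⟩)
  refine ⟨U', V', F', fun p => ⟨(hgood p).1, (hsep p).isOpen_left,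
      (hsep p).isOpen_right, (hsep p).disjoint_closure⟩,
    fun p => ⟨(inter_subset_inter_left _ (subset_closure.trans (hAB _).2.2.2.1)).trans
        (hsep p).inter_subset_left,
      (inter_subset_inter_left _ (subset_closure.trans (hAB _).2.2.2.2)).trans
        (hsep p).inter_subset_right⟩,
    fun y _ => hF'cov ▸ mem_univ y, fun p => (hgood p).2.1,
    fun p => (hsep p).admitsSmallCover,
    Paper.discreteFamily_of_pairwiseDisjoint (fun p => ((hgood p).1.preimage hf).sdiff
      ((hsep p).isOpen_left.union (hsep p).isOpen_right)) (fun p q hpq => ?_)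
      (hF'fin.subset fun p ⟨x, hx, _⟩ => ⟨f x, hx⟩)⟩
  by_cases hlev : lev p = lev q
  · exact ((hF'disj p q hpq hlev).preimage f).mono sdiff_subset sdiff_subset
  · exact (hgap hlev).mono (hwall p) (hwall q)

/-- Lemma 3. -/
theorem stmt5 {X Y : Type*} [MetricSpace X] [CompactSpace X] [MetricSpace Y] [CompactSpace Y]
    (f : X → Y) (hf : Continuous f) (k : ℕ)
    (hdim : ∀ y : Y, Paper.DimLE (f ⁻¹' {y}) (k : ℤ))
    (hCX : Paper.CSpace X) (hCY : Paper.CSpace Y)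
    (ε : ℝ) (hε : 0 < ε)
    (U V : Set X) (hU : IsOpen U) (hV : IsOpen V)
    (hUV : Disjoint (closure U) (closure V))
    (F : Set Y) (hF : IsClosed F) :
    ∃ (U' V' : ℕ → Set X) (F' : ℕ → Set Y),
      (∀ p, IsClosed (F' p) ∧ IsOpen (U' p) ∧ IsOpen (V' p) ∧
        Disjoint (closure (U' p)) (closure (V' p))) ∧
      (∀ p, U ∩ f ⁻¹' F' p ⊆ U' p ∧ V ∩ f ⁻¹' F' p ⊆ V' p) ∧
      (F ⊆ ⋃ p : ℕ, F' p) ∧ (∀ p, Metric.diam (F' p) < ε) ∧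
      (∀ p, Paper.AdmitsSmallCover (f ⁻¹' F' p \ (U' p ∪ V' p)) k ε) ∧
      Paper.DiscreteFamily (fun p : ℕ => f ⁻¹' F' p \ (U' p ∪ V' p)) :=
  stmt5_general f hf k hdim hCY ε hε U V hUV F
end
end

section
/- Let L be a simplicial complex and let π : |L| × [0,1]^k → |L| be the projection. Given triangulations τ of |L| × [0,1]^k and θ of |L| such that π is simplicial with respect to τ and θ, the induced simplicial map ϖ between the nerves of the star-covers ξ = {St(a,τ) : a ∈ τ} and ζ = {St(b,θ) : b ∈ θ} (sending the vertex St(a,τ) to St(π(a),θ)) is well defined and every fiber of ϖ has dimension at most k. -/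
open Set Topology

noncomputable section

/-!
A simplicial map `p` is affine on each simplex `s` and maps its vertices onto a simplex, so the
barycentric weights of `p x` are the pushforward of those of `x`. If `p x` lay in a closed simplex
`t'` missing `p a`, affine independence of `p(s)` would force zero weight on every vertex of `s`
lying over a point outside `t'`; then `x` lies in a face of `s` missing `a`.

The fibre of the projection over `z` is a compact subset of `{z} × [0,1]^k`, isometric to a compact
subset of `ℝᵏ` with the sup metric. The `k + 1` lattices of open cubes of side `r` shifted
diagonally by multiples of `r / (k + 1)` cover `ℝᵏ` with order at most `k + 1`, because each
coordinate of a point is a lattice coordinate for at most one shift. Taking `r` below a Lebesgue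
number of a given cover yields the required refinement.
-/

lemma AffineIndependent.eq_zero_of_sum_smul_mem_convexHull {F : Type*} [AddCommGroup F]
    [Module ℝ F] {t t' : Finset F}
    (ht : AffineIndependent ℝ ((↑) : t → F)) (ht' : t' ⊆ t) {W : F → ℝ}
    (hW : ∑ u ∈ t, W u = 1) (hmem : ∑ u ∈ t, W u • u ∈ convexHull ℝ (t' : Set F))
    {u : F} (hu : u ∈ t) (hut' : u ∉ t') : W u = 0 := by
  classical
  obtain ⟨W', -, hW'1, hW'x⟩ := Finset.mem_convexHull'.1 hmem
  have hdiff := ht.eq_zero_of_sum_eq_zero_subtype (w := fun u => W u - if u ∈ t' then W' u else 0)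
    (by simp [Finset.sum_sub_distrib, Finset.sum_ite_mem, Finset.inter_eq_right.2 ht', hW, hW'1])
    (by simp [sub_smul, ite_smul, Finset.sum_sub_distrib, Finset.sum_ite_mem,
      Finset.inter_eq_right.2 ht', hW'x])
  simpa [hut'] using hdiff u hu

namespace Paper

section Star

variable {E F : Type*} [AddCommGroup E] [Module ℝ E] [AddCommGroup F] [Module ℝ F]
variable {K : Geometry.SimplicialComplex ℝ E} {M : Geometry.SimplicialComplex ℝ F} {p : E → F}

lemma IsSimplicialMap.image_convexHull (hp : IsSimplicialMap K M p) {s : Finset E}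
    (hs : s ∈ K.faces) : p '' convexHull ℝ (s : Set E) = convexHull ℝ (p '' s) := by
  obtain ⟨g, hg⟩ := (hp s hs).2
  rw [Set.image_congr hg, AffineMap.image_convexHull,
    Set.image_congr fun v hv => (hg v (subset_convexHull ℝ _ hv)).symm]

lemma IsSimplicialMap.mem_convexHull_filter [DecidableEq F] (hp : IsSimplicialMap K M p)
    {s : Finset E} (hs : s ∈ K.faces) {x : E} (hx : x ∈ convexHull ℝ (s : Set E)) {t : Finset F}
    (hts : t ⊆ s.image p) (hpx : p x ∈ convexHull ℝ (t : Set F)) :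
    x ∈ convexHull ℝ ((s.filter (p · ∈ t) : Finset E) : Set E) := by
  obtain ⟨w, hw0, hw1, rfl⟩ := Finset.mem_convexHull'.1 hx
  obtain ⟨⟨t₀, ht₀, hst₀⟩, g, hg⟩ := hp s hs
  have hindep : AffineIndependent ℝ ((↑) : s.image p → F) := by
    rw [show s.image p = t₀ from Finset.coe_injective (by simpa using hst₀)]
    exact M.indep ht₀
  have hmaps : ∀ v ∈ s, p v ∈ s.image p := fun v hv => Finset.mem_image_of_mem p hv
  set W : F → ℝ := fun u => ∑ v ∈ s with p v = u, w v
  have hW1 : ∑ u ∈ s.image p, W u = 1 := by rw [Finset.sum_fiberwise_of_maps_to hmaps, hw1]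
  have hpx_eq : p (∑ v ∈ s, w v • v) = ∑ u ∈ s.image p, W u • u := calc
    p (∑ v ∈ s, w v • v) = g (∑ v ∈ s, w v • v) := hg _ hx
    _ = ∑ v ∈ s, w v • g v := by
      have h := Finset.map_affineCombination s id w hw1 g
      rwa [Finset.affineCombination_eq_linear_combination _ _ _ hw1,
        Finset.affineCombination_eq_linear_combination _ _ _ hw1] at h
    _ = ∑ v ∈ s, w v • p v :=
      Finset.sum_congr rfl fun v hv => by rw [hg v (subset_convexHull ℝ _ hv)]
    _ = ∑ u ∈ s.image p, W u • u := by
      rw [← Finset.sum_fiberwise_of_maps_to hmaps]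
      refine Finset.sum_congr rfl fun u _ => ?_
      rw [Finset.sum_smul]
      exact Finset.sum_congr rfl fun v hv => by rw [(Finset.mem_filter.1 hv).2]
  have hsupp : ∀ v ∈ s, w v ≠ 0 → p v ∈ t := fun v hv hwv => by_contra fun hvt => hwv <|
    (Finset.sum_eq_zero_iff_of_nonneg fun v' hv' => hw0 v' (Finset.mem_filter.1 hv').1).1
      (hindep.eq_zero_of_sum_smul_mem_convexHull hts hW1 (hpx_eq ▸ hpx) (hmaps v hv) hvt) v
      (Finset.mem_filter.2 ⟨hv, rfl⟩)
  refine Finset.mem_convexHull'.2 ⟨w, fun v hv => hw0 v (Finset.mem_filter.1 hv).1, ?_, ?_⟩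
  · rw [Finset.sum_filter_of_ne hsupp, hw1]
  · exact Finset.sum_filter_of_ne fun v hv hv0 => hsupp v hv (left_ne_zero_of_smul hv0)

lemma IsSimplicialMap.image_openStar_subset (hp : IsSimplicialMap K M p) (a : E) :
    p '' openStar K a ⊆ openStar M (p a) := by
  classical
  rintro _ ⟨x, ⟨hxK, hxa⟩, rfl⟩
  obtain ⟨s, hs, hxs⟩ := Geometry.SimplicialComplex.mem_space_iff.1 hxK
  obtain ⟨t, ht, hst⟩ := (hp s hs).1
  have hpxt : p x ∈ convexHull ℝ (t : Set F) :=
    hst ▸ hp.image_convexHull hs ▸ mem_image_of_mem p hxs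
  refine ⟨M.convexHull_subset_space ht hpxt, fun hbad => ?_⟩
  obtain ⟨t', ⟨ht', hat'⟩, hpxt'⟩ := Set.mem_iUnion₂.1 hbad
  have hpx : p x ∈ convexHull ℝ ((t ∩ t' : Finset F) : Set F) := by
    rw [Finset.coe_inter, ← M.convexHull_inter_convexHull ht ht']
    exact ⟨hpxt, hpxt'⟩
  have hts : t ∩ t' ⊆ s.image p := fun u hu => by
    have hut : u ∈ (t : Set F) := Finset.mem_of_mem_inter_left hu
    rw [← hst] at hut
    simpa using hut
  have hx' := hp.mem_convexHull_filter hs hxs hts hpx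
  refine hxa (Set.mem_biUnion ⟨K.down_closed hs (Finset.filter_subset _ _) ?_, ?_⟩ hx')
  · exact Finset.coe_nonempty.1 (convexHull_nonempty_iff.1 ⟨x, hx'⟩)
  · exact fun ha => hat' (Finset.mem_inter.1 (Finset.mem_filter.1 ha).2).2

end Star

section Dimension

open Metric

def latticeCube (k : ℕ) (r : ℝ) (j : ℕ) (v : Fin k → ℤ) : Set (Fin k → ℝ) :=
  {x | ∀ i, x i / r - j / (k + 1) ∈ Ioo (v i : ℝ) (v i + 1)}

variable {k : ℕ} {r : ℝ}

lemma isOpen_latticeCube (j : ℕ) (v : Fin k → ℤ) : IsOpen (latticeCube k r j v) := by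
  rw [latticeCube, Set.ofPred_forall]
  exact isOpen_iInter_of_finite fun i => isOpen_Ioo.preimage (by fun_prop)

lemma eq_floor_of_mem_latticeCube {j : ℕ} {v : Fin k → ℤ} {x : Fin k → ℝ}
    (hx : x ∈ latticeCube k r j v) : v = fun i => ⌊x i / r - j / (k + 1)⌋ :=
  funext fun i => (Int.floor_eq_iff.2 ⟨(hx i).1.le, (hx i).2⟩).symm

lemma dist_lt_of_mem_latticeCube (hr : 0 < r) {j : ℕ} {v : Fin k → ℤ} {x y : Fin k → ℝ}
    (hx : x ∈ latticeCube k r j v) (hy : y ∈ latticeCube k r j v) : dist x y < r := by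
  refine (dist_pi_lt_iff hr).2 fun i => ?_
  have hxy : |x i / r - y i / r| < 1 := by
    rw [abs_sub_lt_iff]
    constructor <;> linarith [(hx i).1, (hx i).2, (hy i).1, (hy i).2]
  rwa [← sub_div, abs_div, abs_of_pos hr, div_lt_one hr, ← Real.dist_eq] at hxy

lemma eq_of_fract_sub_div_eq_zero {t : ℝ} {j₁ j₂ : Fin (k + 1)}
    (h₁ : Int.fract (t - j₁ / (k + 1)) = 0) (h₂ : Int.fract (t - j₂ / (k + 1)) = 0) :
    j₁ = j₂ := by
  obtain ⟨z, hz⟩ := Int.fract_eq_fract.1 (h₁.trans h₂.symm)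
  have hk : (0 : ℝ) < k + 1 := by positivity
  have hj₁ : (j₁ : ℝ) < k + 1 := by exact_mod_cast j₁.is_lt
  have hj₂ : (j₂ : ℝ) < k + 1 := by exact_mod_cast j₂.is_lt
  have hdiff : (j₂ : ℝ) - j₁ = z * (k + 1) := by
    field_simp at hz
    linarith
  have hz0 : z = 0 := by
    have hlt : |(z : ℝ)| < 1 := by
      rw [abs_lt]
      constructor <;> nlinarith [Nat.cast_nonneg (α := ℝ) j₁, Nat.cast_nonneg (α := ℝ) j₂]
    exact Int.abs_lt_one_iff.1 (by exact_mod_cast hlt)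
  ext
  exact_mod_cast (by simpa [hz0, sub_eq_zero] using hdiff : (j₂ : ℝ) = j₁).symm

lemma exists_mem_latticeCube (x : Fin k → ℝ) :
    ∃ j : Fin (k + 1), x ∈ latticeCube k r j fun i => ⌊x i / r - j / (k + 1)⌋ := by
  obtain ⟨j, hj⟩ : ∃ j : Fin (k + 1), ∀ i, Int.fract (x i / r - j / (k + 1)) ≠ 0 := by
    by_contra! h
    choose F hF using h
    have hF_inj : Function.Injective F := fun j₁ j₂ he =>
      eq_of_fract_sub_div_eq_zero (hF j₁) (he ▸ hF j₂)
    simpa using Fintype.card_le_of_injective F hF_inj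
  refine ⟨j, fun i => ⟨(Int.floor_le _).lt_of_ne fun h => hj i ?_, Int.lt_floor_add_one _⟩⟩
  rw [← h, Int.fract_intCast]

lemma exists_openCover_orderLE_dist_lt (k : ℕ) (hr : 0 < r) :
    ∃ d : Set (Set (Fin k → ℝ)), (∀ u ∈ d, IsOpen u) ∧ ⋃₀ d = univ ∧
      (∀ u ∈ d, ∀ x ∈ u, ∀ y ∈ u, dist x y < r) ∧ OrderLE d (k + 1) := by
  refine ⟨range fun jv : Fin (k + 1) × (Fin k → ℤ) => latticeCube k r jv.1 jv.2, ?_, ?_, ?_, ?_⟩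
  · rintro _ ⟨⟨j, v⟩, rfl⟩
    exact isOpen_latticeCube j v
  · refine eq_univ_of_forall fun x => ?_
    obtain ⟨j, hj⟩ := exists_mem_latticeCube x
    exact ⟨_, ⟨(j, _), rfl⟩, hj⟩
  · rintro _ ⟨⟨j, v⟩, rfl⟩ x hx y hy
    exact dist_lt_of_mem_latticeCube hr hx hy
  · intro x
    have hsub : {u ∈ range fun jv : Fin (k + 1) × (Fin k → ℤ) => latticeCube k r jv.1 jv.2 | x ∈ u}
        ⊆ range fun j : Fin (k + 1) => latticeCube k r j fun i => ⌊x i / r - j / (k + 1)⌋ := by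
      rintro _ ⟨⟨⟨j, v⟩, rfl⟩, hx⟩
      exact ⟨j, congrArg _ (eq_floor_of_mem_latticeCube hx).symm⟩
    refine ⟨(finite_range _).subset hsub, (ncard_le_ncard hsub (finite_range _)).trans ?_⟩
    exact (Finite.card_range_le _).trans_eq (Nat.card_fin _)

lemma covDimLE_of_isometry {X : Type*} [PseudoMetricSpace X] [CompactSpace X]
    {g : X → Fin k → ℝ} (hg : Isometry g) : CovDimLE X k := by
  intro c hco hcov
  obtain ⟨δ, hδ, hball⟩ := lebesgue_number_lemma_of_metric_sUnion isCompact_univ hco hcov.ge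
  obtain ⟨d, hdo, hdcov, hdsmall, hdord⟩ := exists_openCover_orderLE_dist_lt k hδ
  refine ⟨(g ⁻¹' ·) '' {u ∈ d | (g ⁻¹' u).Nonempty}, ?_, ?_, ?_, fun x => ?_⟩
  · rintro _ ⟨u, ⟨hu, -⟩, rfl⟩
    exact (hdo u hu).preimage hg.continuous
  · refine eq_univ_of_forall fun x => ?_
    obtain ⟨u, hu, hxu⟩ := mem_sUnion.1 (hdcov ▸ mem_univ (g x))
    exact ⟨_, ⟨u, ⟨hu, x, hxu⟩, rfl⟩, hxu⟩
  · rintro _ ⟨u, ⟨hu, x₀, hx₀⟩, rfl⟩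
    obtain ⟨w, hw, hsub⟩ := hball x₀ (mem_univ _)
    refine ⟨w, hw, fun y hy => hsub ?_⟩
    rw [mem_ball, ← hg.dist_eq]
    exact hdsmall u hu _ hy _ hx₀
  · have hsub : {w ∈ (g ⁻¹' ·) '' {u ∈ d | (g ⁻¹' u).Nonempty} | x ∈ w} ⊆
        (g ⁻¹' ·) '' {u ∈ d | g x ∈ u} := by
      rintro _ ⟨⟨u, ⟨hu, -⟩, rfl⟩, hxu⟩
      exact ⟨u, ⟨hu, hxu⟩, rfl⟩
    obtain ⟨hfin, hcard⟩ := hdord (g x)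
    refine ⟨(hfin.image _).subset hsub, ?_⟩
    rw [show ((k : ℤ) + 1).toNat = k + 1 by omega]
    exact (ncard_le_ncard hsub (hfin.image _)).trans ((ncard_image_le hfin).trans hcard)

lemma dimLE_of_isCompact_of_fst_eq {E : Type*} [PseudoMetricSpace E]
    {A : Set (E × (Fin k → ℝ))} (hA : IsCompact A) (z : E) (hz : ∀ x ∈ A, x.1 = z) :
    DimLE A k := by
  have := isCompact_iff_compactSpace.mp hA
  refine covDimLE_of_isometry (g := fun x : A => x.1.2) (Isometry.of_dist_eq fun x y => ?_)
  rw [Subtype.dist_eq, Prod.dist_eq, hz _ x.2, hz _ y.2, dist_self, max_eq_right dist_nonneg]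

end Dimension

end Paper

theorem stmt15_general {m k : ℕ}
    (L : Geometry.SimplicialComplex ℝ (Fin m → ℝ))
    (τ : Geometry.SimplicialComplex ℝ ((Fin m → ℝ) × (Fin k → ℝ)))
    (θ : Geometry.SimplicialComplex ℝ (Fin m → ℝ))
    (hτ : τ.space = L.space ×ˢ {t : Fin k → ℝ | ∀ i, t i ∈ Set.Icc (0:ℝ) 1})
    (hπ : Paper.IsSimplicialMap τ θ Prod.fst) :
    (∀ a ∈ τ.vertices, Prod.fst '' Paper.openStar τ a ⊆ Paper.openStar θ a.1) ∧
    (∀ z : Fin m → ℝ,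
      Paper.DimLE {x : (Fin m → ℝ) × (Fin k → ℝ) | x ∈ τ.space ∧ x.1 = z} (k : ℤ)) := by
  refine ⟨fun a _ => hπ.image_openStar_subset a, fun z => ?_⟩
  have hfiber : {x : (Fin m → ℝ) × (Fin k → ℝ) | x ∈ τ.space ∧ x.1 = z} =
      (L.space ∩ {z}) ×ˢ Icc (0 : Fin k → ℝ) 1 := by
    ext ⟨y, t⟩
    simp only [hτ, mem_ofPred_eq, mem_prod, mem_inter_iff, mem_singleton_iff, mem_Icc,
      Pi.le_def, Pi.zero_apply, Pi.one_apply, forall_and]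
    tauto
  refine Paper.dimLE_of_isCompact_of_fst_eq ?_ z fun x hx => hx.2
  rw [hfiber]
  exact (subsingleton_singleton.anti inter_subset_right).isCompact.prod isCompact_Icc

/-- triangulations `τ` of `|L| × [0,1]^k` and `θ` of `|L|` making the
projection simplicial.  The induced map `ϖ` between the nerves of the star-covers is
identified, via the canonical isomorphisms of the nerve of the star-cover of a
triangulation with the triangulation itself, with the projection; well-definedness of `ϖ`
is the statement that the projection carries open stars of `τ` into open stars of `θ`,
and its fibers are the fibers of the projection restricted to `|L| × [0,1]^k`. -/
theorem stmt15 {m k : ℕ}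
    (L : Geometry.SimplicialComplex ℝ (Fin m → ℝ))
    (τ : Geometry.SimplicialComplex ℝ ((Fin m → ℝ) × (Fin k → ℝ)))
    (θ : Geometry.SimplicialComplex ℝ (Fin m → ℝ))
    (hτ : τ.space = L.space ×ˢ {t : Fin k → ℝ | ∀ i, t i ∈ Set.Icc (0:ℝ) 1})
    (hθ : θ.space = L.space)
    (hπ : Paper.IsSimplicialMap τ θ Prod.fst) :
    (∀ a ∈ τ.vertices, Prod.fst '' Paper.openStar τ a ⊆ Paper.openStar θ a.1) ∧
    (∀ z : Fin m → ℝ,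
      Paper.DimLE {x : (Fin m → ℝ) × (Fin k → ℝ) | x ∈ τ.space ∧ x.1 = z} (k : ℤ)) :=
  stmt15_general L τ θ hτ hπ
end
end

section
/- Let f : X → Y be a continuous map between compact metrizable spaces, let g : X → [0,1]^k be continuous with every fiber of f △ g of covering dimension at most 0, and let ω_X be an open cover of X. Then for every (y,t) ∈ Y × [0,1]^k there exist a finite disjoint family ν of open subsets of X refining ω_X and an open neighborhood O of (y,t) in Y × [0,1]^k such that (f △ g)⁻¹(O) ⊆ ⋃ν. -/
open Set Topology

noncomputable section

/-!
A compact space of covering dimension `0` splits along any open cover into finitely many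
disjoint clopen pieces. Applied to the fiber `F` of `f △ g` over `(y, t)`, these pieces are
disjoint compact subsets of `X`, hence have disjoint open neighbourhoods, which we shrink into
members of `ωX`. Their union `W` is an open neighbourhood of `F`, and since `f △ g` is a closed
map, the points of `Y × [0,1]^k` whose whole fiber lies in `W` form an open neighbourhood `O`
of `(y, t)`.
-/

theorem Paper.OrderLE.pairwiseDisjoint {X : Type*} {c : Set (Set X)} (h : Paper.OrderLE c 1) :
    c.PairwiseDisjoint id := by
  intro u hu v hv huv
  refine Set.disjoint_left.2 fun x hxu hxv => ?_
  have hpair : ({u, v} : Set (Set X)) ⊆ {w ∈ c | x ∈ w} := by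
    rintro w (rfl | rfl) <;> exact ⟨‹_›, ‹_›⟩
  have := (Set.ncard_le_ncard hpair (h x).1).trans (h x).2
  rw [Set.ncard_pair huv] at this
  omega

section

variable {X : Type*} [TopologicalSpace X]

theorem isClosed_of_mem_of_pairwiseDisjoint_of_sUnion_eq_univ {c : Set (Set X)}
    (hco : ∀ u ∈ c, IsOpen u) (hdisj : c.PairwiseDisjoint id) (hc : ⋃₀ c = univ)
    {v : Set X} (hv : v ∈ c) : IsClosed v := by
  have hcompl : vᶜ = ⋃₀ (c \ {v}) := by
    ext x
    constructor
    · intro hx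
      obtain ⟨u, hu, hxu⟩ := mem_sUnion.1 (hc.symm ▸ mem_univ x)
      exact ⟨u, ⟨hu, fun huv => hx (huv ▸ hxu)⟩, hxu⟩
    · rintro ⟨u, ⟨hu, huv⟩, hxu⟩ hxv
      exact Set.disjoint_left.1 (hdisj hu hv huv) hxu hxv
  rw [← isOpen_compl_iff, hcompl]
  exact isOpen_sUnion fun u hu => hco u hu.1

theorem Set.Finite.exists_pairwiseDisjoint_isOpen_superset [T2Space X] {S : Set (Set X)}
    (hS : S.Finite) (hK : ∀ K ∈ S, IsCompact K) (hd : S.PairwiseDisjoint id) :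
    ∃ U : Set X → Set X, (∀ K, IsOpen (U K) ∧ K ⊆ U K) ∧ S.PairwiseDisjoint U :=
  Set.PairwiseDisjoint.exists_mem_filter_basis (l := 𝓝ˢ)
    (fun _K hK' _L hL' hKL => separatedNhds_iff_disjoint.1 <|
      SeparatedNhds.of_isCompact_isCompact (hK _ hK') (hK _ hL') (hd hK' hL' hKL))
    hS hasBasis_nhdsSet

theorem Paper.CovDimLE.exists_finite_clopen_partition [CompactSpace X]
    (hX : Paper.CovDimLE X 0) {c : Set (Set X)} (hco : ∀ u ∈ c, IsOpen u) (hc : ⋃₀ c = univ) :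
    ∃ d : Set (Set X), d.Finite ∧ d.PairwiseDisjoint id ∧ ⋃₀ d = univ ∧
      ∀ v ∈ d, IsClopen v ∧ ∃ u ∈ c, v ⊆ u := by
  obtain ⟨d, hdo, hdcov, hdref, hord⟩ := hX c hco hc
  have hdisj : d.PairwiseDisjoint id := Paper.OrderLE.pairwiseDisjoint hord
  obtain ⟨d', hd'd, hd'fin, hd'cov⟩ :=
    isCompact_univ.elim_finite_subcover_image (c := id) hdo
      (by simp only [id, ← sUnion_eq_biUnion, hdcov, subset_rfl])
  refine ⟨d', hd'fin, hdisj.subset hd'd, ?_, fun v hv => ⟨⟨?_, hdo v (hd'd hv)⟩, hdref v (hd'd hv)⟩⟩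
  · simpa only [id, ← sUnion_eq_biUnion, univ_subset_iff] using hd'cov
  · exact isClosed_of_mem_of_pairwiseDisjoint_of_sUnion_eq_univ hdo hdisj hdcov (hd'd hv)

theorem IsCompact.exists_finite_pairwiseDisjoint_open_refinement [T2Space X] {F : Set X}
    (hF : IsCompact F) (hdim : Paper.DimLE F 0) {ω : Set (Set X)}
    (hωo : ∀ u ∈ ω, IsOpen u) (hFω : F ⊆ ⋃₀ ω) :
    ∃ ν : Set (Set X), ν.Finite ∧ (∀ u ∈ ν, IsOpen u) ∧ ν.PairwiseDisjoint id ∧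
      (∀ u ∈ ν, ∃ w ∈ ω, u ⊆ w) ∧ F ⊆ ⋃₀ ν := by
  have : CompactSpace F := isCompact_iff_compactSpace.1 hF
  obtain ⟨d, hdfin, hddisj, hdcov, hdref⟩ :=
    Paper.CovDimLE.exists_finite_clopen_partition hdim (c := (Subtype.val ⁻¹' ·) '' ω)
      (by rintro _ ⟨w, hw, rfl⟩; exact (hωo w hw).preimage continuous_subtype_val)
      (by
        refine eq_univ_of_forall fun x => ?_
        obtain ⟨w, hw, hxw⟩ := hFω x.2
        exact ⟨_, ⟨w, hw, rfl⟩, hxw⟩)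
  set S : Set (Set X) := (Subtype.val '' ·) '' d
  have hSω : ∀ K ∈ S, ∃ w ∈ ω, K ⊆ w := by
    rintro _ ⟨v, hv, rfl⟩
    obtain ⟨_, ⟨w, hw, rfl⟩, hvw⟩ := (hdref v hv).2
    exact ⟨w, hw, image_subset_iff.2 hvw⟩
  choose! w hwω hKw using hSω
  obtain ⟨U, hU, hUdisj⟩ := Set.Finite.exists_pairwiseDisjoint_isOpen_superset (hdfin.image _)
    (by
      rintro _ ⟨v, hv, rfl⟩
      exact (hdref v hv).1.isClosed.isCompact.image (f := Subtype.val) continuous_subtype_val)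
    (by
      rintro _ ⟨u, hu, rfl⟩ _ ⟨v, hv, rfl⟩ huv
      exact (disjoint_image_iff Subtype.val_injective).2 (hddisj hu hv (ne_of_apply_ne _ huv)))
  refine ⟨(fun K => U K ∩ w K) '' S, (hdfin.image _).image _, ?_, ?_, ?_, ?_⟩
  · rintro _ ⟨K, hK, rfl⟩
    exact (hU K).1.inter (hωo _ (hwω K hK))
  · rintro _ ⟨K, hK, rfl⟩ _ ⟨L, hL, rfl⟩ hKL
    exact (hUdisj hK hL (ne_of_apply_ne (fun K => U K ∩ w K) hKL)).mono
      inter_subset_left inter_subset_left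
  · rintro _ ⟨K, hK, rfl⟩
    exact ⟨w K, hwω K hK, inter_subset_right⟩
  · intro x hx
    obtain ⟨v, hv, hxv⟩ := mem_sUnion.1 (hdcov.symm ▸ mem_univ (⟨x, hx⟩ : F))
    have hK : Subtype.val '' v ∈ S := mem_image_of_mem _ hv
    have hxK : x ∈ Subtype.val '' v := ⟨_, hxv, rfl⟩
    exact ⟨_, mem_image_of_mem _ hK, (hU _).2 hxK, hKw _ hK hxK⟩

end

theorem stmt16 {X Y : Type*} [MetricSpace X] [CompactSpace X] [MetricSpace Y] [CompactSpace Y]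
    (f : X → Y) (hf : Continuous f) (k : ℕ)
    (g : X → Paper.Cube k) (hg : Continuous g)
    (hdim : ∀ (y : Y) (t : Paper.Cube k), Paper.DimLE {x : X | f x = y ∧ g x = t} 0)
    (ωX : Set (Set X)) (hωX : ∀ u ∈ ωX, IsOpen u) (hcov : ⋃₀ ωX = Set.univ) :
    ∀ (y : Y) (t : Paper.Cube k),
      ∃ (ν : Set (Set X)) (O : Set (Y × Paper.Cube k)),
        ν.Finite ∧ (∀ u ∈ ν, IsOpen u) ∧ ν.PairwiseDisjoint id ∧
        (∀ u ∈ ν, ∃ w ∈ ωX, u ⊆ w) ∧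
        IsOpen O ∧ (y, t) ∈ O ∧
        (fun x : X => (f x, g x)) ⁻¹' O ⊆ ⋃₀ ν := by
  intro y t
  have hfiber : IsCompact {x : X | f x = y ∧ g x = t} :=
    ((isClosed_eq hf continuous_const).inter (isClosed_eq hg continuous_const)).isCompact
  obtain ⟨ν, hνfin, hνo, hνdisj, hνω, hfiberν⟩ :=
    hfiber.exists_finite_pairwiseDisjoint_open_refinement (hdim y t) hωX (hcov ▸ subset_univ _)
  have hclosed : IsClosedMap fun x : X => (f x, g x) := (hf.prodMk hg).isClosedMap
  refine ⟨ν, kernImage (fun x : X => (f x, g x)) (⋃₀ ν), hνfin, hνo, hνdisj, hνω,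
    isClosedMap_iff_kernImage.1 hclosed (isOpen_sUnion hνo), ?_, subset_kernImage_iff.1 subset_rfl⟩
  intro x hx
  exact hfiberν (Prod.ext_iff.1 hx)
end
end
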